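/- arXiv:1810.09999 — 8 statements merged into one kernel-verified Lean document; each statement's English description precedes it below -/
import Mathlib

section
/- For any two bounded operators A and B on a Hilbert space, ‖exp(A+B)·exp(−A)‖ ≤ exp( sup_{s∈[0,1]} ‖exp(sA)·B·exp(−sA)‖ ). -/
/-!
The curve `G s = exp (s • (A + B)) * exp (-(s • A))` starts at `G 0 = 1` and solves the linear
equation `G' = G * C` with `C s = exp (s • A) * B * exp (-(s • A))`. Grönwall's inequality then
bounds `‖G 1‖` by `exp (sup_{[0, 1]} ‖C‖)`.
-/

open NormedSpace Set

theorem le_ciSup_of_continuousOn {β : Type*} [TopologicalSpace β] {K : Set β} {f : β → ℝ}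
    (hK : IsCompact K) (hf : ContinuousOn f K) {x : β} (hx : x ∈ K) :
    f x ≤ ⨆ y : K, f y :=
  le_ciSup (by simpa only [image_eq_range] using hK.bddAbove_image hf) (⟨x, hx⟩ : K)

theorem norm_le_mul_exp_of_hasDerivAt_mul_right {R : Type*} [NormedRing R] [NormedSpace ℝ R]
    {G C : ℝ → R} {M a b : ℝ} (hG : ∀ s ∈ Icc a b, HasDerivAt G (G s * C s) s)
    (hC : ∀ s ∈ Ico a b, ‖C s‖ ≤ M) :
    ∀ x ∈ Icc a b, ‖G x‖ ≤ ‖G a‖ * Real.exp (M * (x - a)) := by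
  intro x hx
  rw [← gronwallBound_ε0]
  refine norm_le_gronwallBound_of_norm_deriv_right_le
    (fun s hs => (hG s hs).continuousAt.continuousWithinAt)
    (fun s hs => (hG s (Ico_subset_Icc_self hs)).hasDerivWithinAt) le_rfl (fun s hs => ?_) x hx
  calc ‖G s * C s‖ ≤ ‖G s‖ * ‖C s‖ := norm_mul_le _ _
    _ ≤ M * ‖G s‖ + 0 := by nlinarith [hC s hs, norm_nonneg (G s)]

section BanachAlgebra

variable {𝔸 : Type*} [NormedRing 𝔸] [NormedAlgebra ℝ 𝔸] [CompleteSpace 𝔸]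

theorem exp_neg_mul_exp (x : 𝔸) : exp (-x) * exp x = 1 := by
  let +nondep : NormedAlgebra ℚ 𝔸 := .restrictScalars ℚ ℝ 𝔸
  rw [← exp_add_of_commute (Commute.refl x).neg_left, neg_add_cancel, exp_zero]

theorem continuous_exp_smul_mul_mul_exp_neg_smul (A B : 𝔸) :
    Continuous fun s : ℝ => exp (s • A) * B * exp (-(s • A)) := by
  simp only [← smul_neg]
  exact ((differentiable_exp_smul_const ℝ A).continuous.mul continuous_const).mul
    (differentiable_exp_smul_const ℝ (-A)).continuous

theorem hasDerivAt_exp_smul_add_mul_exp_neg_smul (A B : 𝔸) (t : ℝ) :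
    HasDerivAt (fun s : ℝ => exp (s • (A + B)) * exp (-(s • A)))
      (exp (t • (A + B)) * B * exp (-(t • A))) t := by
  have h := (hasDerivAt_exp_smul_const (A + B) t).mul (hasDerivAt_exp_smul_const' (-A) t)
  simp only [smul_neg] at h
  exact h.congr_deriv (by noncomm_ring)

theorem exp_smul_add_mul_mul_exp_neg_smul (A B : 𝔸) (t : ℝ) :
    exp (t • (A + B)) * B * exp (-(t • A)) =
      exp (t • (A + B)) * exp (-(t • A)) * (exp (t • A) * B * exp (-(t • A))) := by
  simp only [mul_assoc]
  rw [← mul_assoc (exp (-(t • A))), exp_neg_mul_exp, one_mul]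

end BanachAlgebra

/-- ‖e^{A+B} e^{−A}‖ ≤ exp( sup_{s∈[0,1]} ‖e^{sA} B e^{−sA}‖ )
for bounded operators A, B on a complex Hilbert space. -/
theorem norm_exp_add_mul_exp_neg_le
    {E : Type*} [NormedAddCommGroup E] [InnerProductSpace ℂ E] [CompleteSpace E]
    (A B : E →L[ℂ] E) :
    ‖NormedSpace.exp (A + B) * NormedSpace.exp (-A)‖ ≤
      Real.exp (⨆ s : Set.Icc (0 : ℝ) 1,
        ‖NormedSpace.exp ((s : ℝ) • A) * B * NormedSpace.exp (-((s : ℝ) • A))‖) := by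
  have hG := norm_le_mul_exp_of_hasDerivAt_mul_right
    (G := fun s : ℝ => exp (s • (A + B)) * exp (-(s • A)))
    (C := fun s : ℝ => exp (s • A) * B * exp (-(s • A)))
    (fun t _ => by
      simpa only [exp_smul_add_mul_mul_exp_neg_smul] using
        hasDerivAt_exp_smul_add_mul_exp_neg_smul A B t)
    (fun s hs => le_ciSup_of_continuousOn isCompact_Icc
      (continuous_exp_smul_mul_mul_exp_neg_smul A B).norm.continuousOn (Ico_subset_Icc_self hs))
    1 ⟨zero_le_one, le_rfl⟩
  simp only [one_smul, zero_smul, neg_zero, exp_zero, mul_one, sub_zero] at hG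
  exact hG.trans (mul_le_of_le_one_left (Real.exp_pos _).le ContinuousLinearMap.norm_id_le)
end

section
/- Let H be a finite-dimensional Hilbert space, H₀ and V self-adjoint operators on H, and ρ a density matrix (positive, trace one) commuting with H₀. Define χ_t = tr( e^{−itH} ρ e^{H₀} e^{itH} e^{−H₀} ) with H = H₀ + V. Then χ_t is a positive real number and satisfies e^{−2|t|S} ≤ χ_t ≤ e^{2|t|S}, where S = sup_{s∈[−1,1]} ‖e^{(s/2)H₀} V e^{−(s/2)H₀}‖. -/
/-!
Put `A = e^{-H₀/2} e^{-itH} e^{H₀/2}`. Since `ρ` commutes with `H₀`, cyclicity of the trace turns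
`χ_t` into `tr (A ρ A*)`, which is real, nonnegative and at most `‖A‖²` because `ρ` is a state;
conversely `ρ = A⁻¹ (A ρ A*) A⁻¹*` gives `1 ≤ ‖A⁻¹‖² χ_t`. Conjugating by `e^{-H₀/2}` turns
`A` and `A⁻¹ = e^{-H₀/2} e^{itH} e^{H₀/2}` into `e^{∓it(H₀ + W)}` with `W = e^{-H₀/2} V e^{H₀/2}`,
the `s = -1` term of `S`; as `e^{iuH₀}` is unitary, Grönwall's inequality bounds their norms by
`e^{|t| ‖W‖} ≤ e^{|t| S}`.
-/

open scoped Matrix.Norms.L2Operator ComplexOrder Matrix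

open NormedSpace

namespace NormedSpace

variable {𝔸 : Type*} [NormedRing 𝔸] [NormedAlgebra ℚ 𝔸] [CompleteSpace 𝔸]

theorem exp_mul_exp_neg (x : 𝔸) : exp x * exp (-x) = 1 := by
  rw [← exp_add_of_commute (Commute.refl x).neg_right, add_neg_cancel, exp_zero]

theorem exp_neg_mul_exp (x : 𝔸) : exp (-x) * exp x = 1 := by
  rw [← exp_add_of_commute (Commute.refl x).neg_left, neg_add_cancel, exp_zero]

theorem exp_conj_mul_exp_neg_conj (c x : 𝔸) :
    exp c * exp x * exp (-c) * (exp c * exp (-x) * exp (-c)) = 1 := by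
  calc exp c * exp x * exp (-c) * (exp c * exp (-x) * exp (-c))
      = exp c * (exp x * (exp (-c) * exp c) * exp (-x)) * exp (-c) := by simp only [mul_assoc]
    _ = 1 := by rw [exp_neg_mul_exp, mul_one, exp_mul_exp_neg, mul_one, exp_mul_exp_neg]

end NormedSpace

/-- `f u = exp (-u a) exp (u (a + b))` solves `f' = exp (-u a) b exp (u a) f`, so Grönwall bounds
it by `exp (u ‖b‖)`. -/
theorem norm_exp_smul_add_le_of_norm_exp_smul_le_one {𝔸 : Type*} [NormedRing 𝔸]
    [NormedAlgebra ℝ 𝔸] [CompleteSpace 𝔸] {a : 𝔸} (ha : ∀ u : ℝ, ‖exp (u • a)‖ ≤ 1)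
    (b : 𝔸) {τ : ℝ} (hτ : 0 ≤ τ) : ‖exp (τ • (a + b))‖ ≤ Real.exp (τ * ‖b‖) := by
  let _ : NormedAlgebra ℚ 𝔸 := .restrictScalars ℚ ℝ 𝔸
  set f : ℝ → 𝔸 := fun u => exp (u • -a) * exp (u • (a + b))
  have hexp_neg (u : ℝ) : ‖exp (u • -a)‖ ≤ 1 := by rw [smul_neg, ← neg_smul]; exact ha (-u)
  have hexp_le (u : ℝ) : ‖exp (u • (a + b))‖ ≤ ‖f u‖ := by
    rw [← one_mul (exp _), ← exp_mul_exp_neg (u • a), mul_assoc, ← smul_neg]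
    exact (norm_mul_le _ _).trans (mul_le_of_le_one_left (norm_nonneg _) (ha u))
  have hderiv (u : ℝ) : HasDerivAt f (exp (u • -a) * b * exp (u • (a + b))) u := by
    convert (hasDerivAt_exp_smul_const (-a) u).fun_mul (hasDerivAt_exp_smul_const' (a + b) u)
      using 1
    noncomm_ring
  have hbound (u : ℝ) : ‖exp (u • -a) * b * exp (u • (a + b))‖ ≤ ‖b‖ * ‖f u‖ + 0 :=
    calc ‖exp (u • -a) * b * exp (u • (a + b))‖
        ≤ ‖exp (u • -a)‖ * ‖b‖ * ‖exp (u • (a + b))‖ := norm_mul₃_le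
      _ ≤ 1 * ‖b‖ * ‖f u‖ := by gcongr; exacts [hexp_neg u, hexp_le u]
      _ = ‖b‖ * ‖f u‖ + 0 := by ring
  have hf0 : ‖f 0‖ ≤ 1 := by simpa [f] using ha 0
  have hfτ := norm_le_gronwallBound_of_norm_deriv_right_le
    (fun u _ => (hderiv u).continuousAt.continuousWithinAt) (fun u _ => (hderiv u).hasDerivWithinAt)
    hf0 (fun u _ => hbound u) τ ⟨hτ, le_rfl⟩
  rw [gronwallBound_ε0, sub_zero, one_mul, mul_comm] at hfτ
  exact (hexp_le τ).trans hfτ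

section CStarAlgebra

variable {A : Type*} [CStarAlgebra A]

theorem IsSelfAdjoint.norm_exp_I_smul_le_one {a : A} (ha : IsSelfAdjoint a) :
    ‖NormedSpace.exp (Complex.I • a)‖ ≤ 1 := by
  rcases subsingleton_or_nontrivial A with _ | _
  · simp [Subsingleton.elim (NormedSpace.exp (Complex.I • a)) 0]
  · exact (CStarRing.norm_coe_unitary (selfAdjoint.expUnitary ⟨a, ha⟩)).le

theorem IsSelfAdjoint.norm_exp_smul_I_smul_add_le {a : A} (ha : IsSelfAdjoint a) (b : A) {τ : ℝ}
    (hτ : 0 ≤ τ) : ‖NormedSpace.exp (τ • Complex.I • (a + b))‖ ≤ Real.exp (τ * ‖b‖) := by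
  have hunitary (u : ℝ) : ‖NormedSpace.exp (u • Complex.I • a)‖ ≤ 1 := by
    rw [smul_comm u Complex.I a]
    exact ((IsSelfAdjoint.all u).smul ha).norm_exp_I_smul_le_one
  simpa [norm_smul] using norm_exp_smul_add_le_of_norm_exp_smul_le_one hunitary (Complex.I • b) hτ

theorem IsSelfAdjoint.norm_exp_I_mul_smul_add_le {a : A} (ha : IsSelfAdjoint a) (b : A) (t : ℝ) :
    ‖NormedSpace.exp ((Complex.I * t) • (a + b))‖ ≤ Real.exp (|t| * ‖b‖) := by
  rcases le_total 0 t with ht | ht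
  · convert ha.norm_exp_smul_I_smul_add_le b ht using 3
    · rw [mul_comm, mul_smul, Complex.coe_smul]
    · exact abs_of_nonneg ht
  · convert ha.neg.norm_exp_smul_I_smul_add_le (-b) (neg_nonneg.mpr ht) using 3
    · rw [← neg_add, smul_neg, neg_smul_neg, mul_comm, mul_smul, Complex.coe_smul]
    · rw [abs_of_nonpos ht]
    · rw [norm_neg]

theorem IsSelfAdjoint.norm_exp_conj_exp_I_mul_smul_add_le {a c : A} (ha : IsSelfAdjoint a)
    (hca : Commute c a) (b : A) (t : ℝ) :
    ‖NormedSpace.exp c * NormedSpace.exp ((Complex.I * t) • (a + b)) * NormedSpace.exp (-c)‖ ≤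
      Real.exp (|t| * ‖NormedSpace.exp c * b * NormedSpace.exp (-c)‖) := by
  let _ : NormedAlgebra ℚ A := .restrictScalars ℚ ℂ A
  let _ := invertibleExp c
  have hinv : ((unitOfInvertible (NormedSpace.exp c))⁻¹ : Aˣ) = NormedSpace.exp (-c) := invOf_exp c
  have hconj_a : NormedSpace.exp c * a * NormedSpace.exp (-c) = a := by
    rw [hca.exp_left.eq, mul_assoc, NormedSpace.exp_mul_exp_neg, mul_one]
  have hconj := NormedSpace.exp_units_conj (unitOfInvertible (NormedSpace.exp c))
    ((Complex.I * t) • (a + b))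
  rw [hinv, val_unitOfInvertible, mul_smul_comm, smul_mul_assoc, mul_add, add_mul, hconj_a] at hconj
  rw [← hconj]
  exact ha.norm_exp_I_mul_smul_add_le _ t

end CStarAlgebra

namespace Matrix

variable {n : Type*} [Fintype n] [DecidableEq n]

theorem IsHermitian.conjTranspose_exp_neg_I_mul_smul {H : Matrix n n ℂ} (hH : H.IsHermitian)
    (t : ℝ) :
    (NormedSpace.exp ((-(Complex.I * t)) • H))ᴴ = NormedSpace.exp ((Complex.I * t) • H) := by
  rw [← exp_conjTranspose, conjTranspose_smul, hH.eq]
  congr 2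
  simp

theorem trace_mul_mul_exp_mul_conjTranspose_mul_exp_neg {ρ H c : Matrix n n ℂ}
    (hc : IsSelfAdjoint c) (hcH : c + c = -H) (hρc : Commute ρ c) (X : Matrix n n ℂ) :
    (X * ρ * exp H * Xᴴ * exp (-H)).trace =
      (exp c * X * exp (-c) * ρ * (exp c * X * exp (-c))ᴴ).trace := by
  let _ : NormedAlgebra ℚ (Matrix n n ℂ) := .restrictScalars ℚ ℂ _
  have hexp_H : exp H = exp (-c) * exp (-c) := by
    rw [← NormedSpace.exp_add_of_commute (Commute.refl _), ← neg_add, hcH, neg_neg]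
  have hexp_neg_H : exp (-H) = exp c * exp c := by
    rw [← NormedSpace.exp_add_of_commute (Commute.refl _), hcH]
  have hexp_c : (exp c)ᴴ = exp c := hc.exp
  have hexp_neg_c : (exp (-c))ᴴ = exp (-c) := hc.neg.exp
  have hρ : ρ * exp (-c) = exp (-c) * ρ := hρc.neg_right.exp_right.eq
  rw [hexp_H, hexp_neg_H, conjTranspose_mul, conjTranspose_mul, hexp_c, hexp_neg_c]
  calc (X * ρ * (exp (-c) * exp (-c)) * Xᴴ * (exp c * exp c)).trace
      = (X * exp (-c) * ρ * exp (-c) * Xᴴ * exp c * exp c).trace := by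
        simp only [mul_assoc]; rw [← mul_assoc ρ, hρ, mul_assoc]
    _ = _ := by rw [trace_mul_comm]; simp only [mul_assoc]

open scoped MatrixOrder in
theorem trace_mul_mul_conjTranspose_le {ρ : Matrix n n ℂ} (hρ : ρ.PosSemidef) (A : Matrix n n ℂ) :
    (A * ρ * Aᴴ).trace ≤ (‖A‖ ^ 2 : ℝ) • ρ.trace := by
  obtain ⟨b, rfl⟩ := CStarAlgebra.nonneg_iff_eq_star_mul_self.mp hρ.nonneg
  have hle : b * (star A * A) * star b ≤ ‖A‖ ^ 2 • (b * star b) := by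
    simpa [Algebra.algebraMap_eq_smul_one] using
      star_right_conjugate_le_conjugate CStarAlgebra.star_mul_le_algebraMap_norm_sq b
  have htr := (Matrix.le_iff.mp hle).trace_nonneg
  simp only [star_eq_conjTranspose, trace_sub, sub_nonneg, trace_smul] at htr ⊢
  calc (A * (bᴴ * b) * Aᴴ).trace = ((A * bᴴ) * (b * Aᴴ)).trace := by simp only [mul_assoc]
    _ = ((b * Aᴴ) * (A * bᴴ)).trace := trace_mul_comm _ _
    _ ≤ _ := by simpa only [mul_assoc, trace_mul_comm b] using htr

theorem PosSemidef.trace_le_norm_sq_smul_trace_mul_mul_conjTranspose {ρ : Matrix n n ℂ}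
    (hρ : ρ.PosSemidef) {A B : Matrix n n ℂ} (hBA : B * A = 1) :
    ρ.trace ≤ (‖B‖ ^ 2 : ℝ) • (A * ρ * Aᴴ).trace := by
  have hρ_eq : ρ = B * (A * ρ * Aᴴ) * Bᴴ := by
    rw [← mul_assoc, ← mul_assoc, hBA, one_mul, mul_assoc, ← conjTranspose_mul, hBA,
      conjTranspose_one, mul_one]
  conv_lhs => rw [hρ_eq]
  exact trace_mul_mul_conjTranspose_le (hρ.mul_mul_conjTranspose_same A) B

theorem PosSemidef.trace_mul_mul_conjTranspose_bounds {ρ : Matrix n n ℂ} (hρ : ρ.PosSemidef)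
    (hρtr : ρ.trace = 1) {A B : Matrix n n ℂ} (hBA : B * A = 1) {E : ℝ} (hA : ‖A‖ ≤ E)
    (hB : ‖B‖ ≤ E) :
    (A * ρ * Aᴴ).trace.im = 0 ∧ (E ^ 2)⁻¹ ≤ (A * ρ * Aᴴ).trace.re ∧
      (A * ρ * Aᴴ).trace.re ≤ E ^ 2 := by
  obtain ⟨hre_nonneg, him⟩ := Complex.le_def.mp (hρ.mul_mul_conjTranspose_same A).trace_nonneg
  have hle : (A * ρ * Aᴴ).trace.re ≤ ‖A‖ ^ 2 := by
    simpa only [hρtr, Complex.smul_re, smul_eq_mul, Complex.one_re, mul_one] using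
      (Complex.le_def.mp (trace_mul_mul_conjTranspose_le hρ A)).1
  have hge : 1 ≤ ‖B‖ ^ 2 * (A * ρ * Aᴴ).trace.re := by
    simpa only [hρtr, Complex.smul_re, smul_eq_mul, Complex.one_re] using
      (Complex.le_def.mp (hρ.trace_le_norm_sq_smul_trace_mul_mul_conjTranspose hBA)).1
  have hge' : 1 ≤ E ^ 2 * (A * ρ * Aᴴ).trace.re := hge.trans (by gcongr)
  refine ⟨him.symm, ?_, hle.trans (by gcongr)⟩
  rwa [inv_le_iff_one_le_mul₀' (pos_of_mul_pos_left (one_pos.trans_le hge') hre_nonneg)]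

end Matrix

/-- for a finite-dimensional system with H = H₀ + V and density matrix ρ
commuting with H₀, the quantity χ_t = tr(e^{−itH} ρ e^{H₀} e^{itH} e^{−H₀}) is a positive
real number satisfying e^{−2|t|S} ≤ χ_t ≤ e^{2|t|S}, with
S = sup_{s∈[−1,1]} ‖e^{(s/2)H₀} V e^{−(s/2)H₀}‖. -/
theorem chi_t_bounds
    {n : Type*} [Fintype n] [DecidableEq n]
    (H0 V ρ : Matrix n n ℂ)
    (hH0 : H0.IsHermitian) (hV : V.IsHermitian)
    (hρ : ρ.PosSemidef) (hρtr : ρ.trace = 1) (hcomm : ρ * H0 = H0 * ρ)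
    (t : ℝ) (S : ℝ)
    (hS : S = ⨆ s : Set.Icc (-1 : ℝ) 1,
      ‖NormedSpace.exp ((((s : ℝ) / 2 : ℝ) : ℂ) • H0) * V *
        NormedSpace.exp (-((((s : ℝ) / 2 : ℝ) : ℂ) • H0))‖)
    (χ : ℂ)
    (hχ : χ = (NormedSpace.exp ((-(Complex.I * t)) • (H0 + V)) * ρ *
      NormedSpace.exp H0 * NormedSpace.exp ((Complex.I * t) • (H0 + V)) *
      NormedSpace.exp (-H0)).trace) :
    χ.im = 0 ∧ 0 < χ.re ∧
      Real.exp (-(2 * |t| * S)) ≤ χ.re ∧ χ.re ≤ Real.exp (2 * |t| * S) := by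
  let _ : NormedAlgebra ℚ (Matrix n n ℂ) := .restrictScalars ℚ ℂ _
  set c : Matrix n n ℂ := (((-1 : ℝ) / 2 : ℝ) : ℂ) • H0
  have hcS : ‖exp c * V * exp (-c)‖ ≤ S := by
    rw [hS]
    exact le_ciSup (f := fun s : Set.Icc (-1 : ℝ) 1 =>
      ‖exp ((((s : ℝ) / 2 : ℝ) : ℂ) • H0) * V * exp (-((((s : ℝ) / 2 : ℝ) : ℂ) • H0))‖)
      (isCompact_range (by fun_prop)).bddAbove ⟨-1, by norm_num⟩
  have hnorm (τ : ℝ) (hτ : |τ| = |t|) :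
      ‖exp c * exp ((Complex.I * τ) • (H0 + V)) * exp (-c)‖ ≤ Real.exp (|t| * S) :=
    (hH0.isSelfAdjoint.norm_exp_conj_exp_I_mul_smul_add_le ((Commute.refl H0).smul_left _) V
      τ).trans (by rw [hτ]; gcongr)
  have hA := hnorm (-t) (abs_neg t)
  rw [show Complex.I * ((-t : ℝ) : ℂ) = -(Complex.I * t) by push_cast; ring] at hA
  rw [hχ, ← Matrix.IsHermitian.conjTranspose_exp_neg_I_mul_smul (hH0.add hV) t,
    Matrix.trace_mul_mul_exp_mul_conjTranspose_mul_exp_neg (c := c)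
      (IsSelfAdjoint.smul (Complex.conj_ofReal _) hH0)
      (by simp only [c]; module) (Commute.smul_right hcomm _)]
  obtain ⟨him, hlower, hupper⟩ := hρ.trace_mul_mul_conjTranspose_bounds hρtr
    (by rw [neg_smul]; exact exp_conj_mul_exp_neg_conj _ _) hA (hnorm t rfl)
  have hE : Real.exp (|t| * S) ^ 2 = Real.exp (2 * |t| * S) := by
    rw [← Real.exp_nat_mul]; ring_nf
  rw [hE, ← Real.exp_neg] at hlower
  rw [hE] at hupper
  exact ⟨him, (Real.exp_pos _).trans_le hlower, hlower, hupper⟩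
end

section
/- Let ℙ_t be the Two-Time Measurement distribution of a finite-dimensional time-reversal invariant multisystem with multi-thermal initial state at inverse temperatures β = (β₁,…,β_ℓ). Then for every φ ∈ ℝ^ℓ with ℙ_t(φ) ≠ 0 one has ℙ_t(−φ) ≠ 0 and ℙ_t(φ)/ℙ_t(−φ) = exp( t Σ_j β_j φ_j ). Equivalently χ_t(α) = χ_t(β − α) for all α ∈ ℝ^ℓ. -/
/-!
Since `ρ` is a function of the `H_j`, `ρ P_i = Z⁻¹ e^{-β·e_i} P_i`, so `ℙ_t(φ)` is a sum over pairs
`(v, w)` of joint eigenvalues with `w - v = tφ` of `Z⁻¹ e^{-β·v} s(v, w)`, where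
`s(v, w) = Re tr(e^{-itH} K_v e^{itH} K_w)` and `K_v` is the joint spectral projection of `v`.
Conjugation by the antiunitary `C` fixes `H` and every `K_v` (joint eigenprojections are determined
by their eigenvalue equations), turns `e^{-itH}` into `e^{itH}`, and conjugates traces; hence
`s(v, w) = s(w, v)`. Exchanging `v` and `w` multiplies the Boltzmann weight by `e^{tβ·φ}`, which is
the fluctuation relation, and the same exchange gives `χ_t(α) = χ_t(β - α)`.
-/

open Finset Matrix

section FiberSums

variable {ι κ R : Type*} [Fintype ι] [DecidableEq κ] [CommSemiring R]

theorem Finset.sum_sum_comp_eq_sum_image (e : ι → κ) (F : κ → κ → R) (b : ι → ι → R) :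
    ∑ i, ∑ i', F (e i) (e i') * b i i' =
      ∑ v ∈ univ.image e, ∑ w ∈ univ.image e,
        F v w * ∑ i with e i = v, ∑ i' with e i' = w, b i i' := by
  have he : ∀ i ∈ univ, e i ∈ univ.image e := fun i _ => mem_image_of_mem e (mem_univ i)
  calc _ = ∑ v ∈ univ.image e, ∑ i with e i = v, ∑ w ∈ univ.image e, ∑ i' with e i' = w,
        F v w * b i i' := by
        rw [← sum_fiberwise_of_maps_to he]
        refine sum_congr rfl fun v _ => sum_congr rfl fun i hi => ?_
        rw [← sum_fiberwise_of_maps_to he, (mem_filter.1 hi).2]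
        exact sum_congr rfl fun w _ => sum_congr rfl fun i' hi' => by rw [(mem_filter.1 hi').2]
    _ = _ := by simp_rw [mul_sum]; exact sum_congr rfl fun v _ => sum_comm

theorem Finset.sum_sum_comp_swap_of_fiber_symm (e : ι → κ) (b : ι → ι → R)
    (hb : ∀ v w, ∑ i with e i = v, ∑ i' with e i' = w, b i i' =
      ∑ i with e i = w, ∑ i' with e i' = v, b i i')
    (F : κ → κ → R) :
    ∑ i, ∑ i', F (e i) (e i') * b i i' = ∑ i, ∑ i', F (e i') (e i) * b i i' := by
  rw [sum_sum_comp_eq_sum_image, sum_sum_comp_eq_sum_image e (fun v w => F w v), sum_comm]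
  simp_rw [hb]

end FiberSums

section JointEigen

variable {𝕜 A κ : Type*} [Field 𝕜] [Ring A] [Algebra 𝕜 A]

theorem mul_eq_zero_of_mul_eq_smul {K L E : A} {a b : 𝕜} (hK : K * E = a • K)
    (hL : E * L = b • L) (hab : a ≠ b) : K * L = 0 := by
  have h : (a - b) • (K * L) = 0 := by
    rw [sub_smul, sub_eq_zero, ← smul_mul_assoc, ← hK, mul_assoc, hL, mul_smul_comm]
  exact (smul_eq_zero.1 h).resolve_left (sub_ne_zero.2 hab)

theorem eq_of_sum_eq_one_of_mul_eq_smul {s : Finset (κ → 𝕜)} {K L : (κ → 𝕜) → A} {E : κ → A}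
    (hK : ∑ v ∈ s, K v = 1) (hL : ∑ v ∈ s, L v = 1)
    (hKE : ∀ v ∈ s, ∀ j, K v * E j = v j • K v) (hEL : ∀ v ∈ s, ∀ j, E j * L v = v j • L v)
    {v : κ → 𝕜} (hv : v ∈ s) : K v = L v := by
  have horth : ∀ v ∈ s, ∀ w ∈ s, v ≠ w → K v * L w = 0 := fun v hv w hw hvw => by
    obtain ⟨j, hj⟩ := Function.ne_iff.1 hvw
    exact mul_eq_zero_of_mul_eq_smul (hKE v hv j) (hEL w hw j) hj
  calc K v = ∑ w ∈ s, K v * L w := by rw [← mul_sum, hL, mul_one]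
    _ = K v * L v := sum_eq_single_of_mem v hv fun w hw hwv => horth v hv w hw (Ne.symm hwv)
    _ = ∑ w ∈ s, K w * L v := (sum_eq_single_of_mem v hv fun w hw hwv => horth w hw v hv hwv).symm
    _ = L v := by rw [← sum_mul, hK, one_mul]

end JointEigen

namespace CompleteOrthogonalIdempotents

variable {𝕜 A ι : Type*} [CommSemiring 𝕜] [Semiring A] [Algebra 𝕜 A] [Fintype ι] {P : ι → A}

theorem sum_smul_mul_self (hP : CompleteOrthogonalIdempotents P) (f : ι → 𝕜) (i : ι) :
    (∑ k, f k • P k) * P i = f i • P i := by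
  classical
  simp [sum_mul, hP.mul_eq]

theorem self_mul_sum_smul (hP : CompleteOrthogonalIdempotents P) (f : ι → 𝕜) (i : ι) :
    P i * ∑ k, f k • P k = f i • P i := by
  classical
  simp [mul_sum, hP.mul_eq]

theorem sum_mul_sum_smul_of_eqOn (hP : CompleteOrthogonalIdempotents P) {s : Finset ι}
    {f : ι → 𝕜} {c : 𝕜} (hf : ∀ i ∈ s, f i = c) :
    (∑ i ∈ s, P i) * ∑ k, f k • P k = c • ∑ i ∈ s, P i := by
  simp_rw [sum_mul, hP.self_mul_sum_smul, smul_sum]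
  exact sum_congr rfl fun i hi => by rw [hf i hi]

theorem sum_smul_mul_sum_of_eqOn (hP : CompleteOrthogonalIdempotents P) {s : Finset ι}
    {f : ι → 𝕜} {c : 𝕜} (hf : ∀ i ∈ s, f i = c) :
    (∑ k, f k • P k) * ∑ i ∈ s, P i = c • ∑ i ∈ s, P i := by
  simp_rw [mul_sum, hP.sum_smul_mul_self, smul_sum]
  exact sum_congr rfl fun i hi => by rw [hf i hi]

noncomputable def piAlgHom (hP : CompleteOrthogonalIdempotents P) : (ι → 𝕜) →ₐ[𝕜] A :=
  AlgHom.ofLinearMap (Fintype.linearCombination 𝕜 P)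
    (by simp [Fintype.linearCombination_apply, hP.complete])
    (fun f g => by
      simp only [Fintype.linearCombination_apply, mul_sum, hP.sum_smul_mul_self,
        mul_smul_comm, Pi.mul_apply, mul_comm (f _), mul_smul])

theorem piAlgHom_apply (hP : CompleteOrthogonalIdempotents P) (f : ι → 𝕜) :
    hP.piAlgHom f = ∑ i, f i • P i :=
  Fintype.linearCombination_apply 𝕜 P f

end CompleteOrthogonalIdempotents

theorem Matrix.exp_algHom_pi {n ι : Type*} [Fintype n] [DecidableEq n] [Fintype ι] (ψ : (ι → ℝ) →ₐ[ℝ] Matrix n n ℂ)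
    (f : ι → ℝ) : NormedSpace.exp (ψ f) = ψ (fun i => Real.exp (f i)) := by
  let _ := Matrix.linftyOpNormedRing (n := n) (α := ℂ)
  let _ := Matrix.linftyOpNormedAlgebra (n := n) (R := ℚ) (α := ℂ)
  have h := NormedSpace.map_exp ψ ψ.toLinearMap.continuous_of_finiteDimensional f
  rw [Pi.exp_def] at h
  simp only [← Real.exp_eq_exp_ℝ] at h
  exact h.symm

theorem Matrix.trace_eq_finrank_of_isIdempotentElem {n K : Type*} [Fintype n] [DecidableEq n]
    [Field K] {P : Matrix n n K}
    (hP : IsIdempotentElem P) : P.trace = Module.finrank K (LinearMap.range (toLin' P)) := by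
  rw [← trace_toLin'_eq]
  exact (LinearMap.IsIdempotentElem.isProj_range _ (hP.map (toLinAlgEquiv' (R := K)))).trace

section AntilinearConj

variable {n : Type*} [Fintype n] [DecidableEq n] {M : Matrix n n ℂ}

/-- The matrix of `X ↦ C ∘ X ∘ C⁻¹` for the antilinear involution `C v = M * conj v`. -/
def antilinearConj (M : Matrix n n ℂ) (hM : M * M.map (starRingEnd ℂ) = 1) :
    Matrix n n ℂ →+* Matrix n n ℂ where
  toFun X := M * X.map (starRingEnd ℂ) * M.map (starRingEnd ℂ)
  map_one' := by simp [hM]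
  map_mul' X Y := by
    have h : M.map (starRingEnd ℂ) * M = 1 := mul_eq_one_comm.1 hM
    calc M * (X * Y).map (starRingEnd ℂ) * M.map (starRingEnd ℂ)
        = M * X.map (starRingEnd ℂ) * (M.map (starRingEnd ℂ) * M) * Y.map (starRingEnd ℂ) *
            M.map (starRingEnd ℂ) := by rw [h, mul_one, Matrix.map_mul]; simp only [mul_assoc]
      _ = _ := by simp only [mul_assoc]
  map_zero' := by simp
  map_add' X Y := by simp [Matrix.map_add, mul_add, add_mul]

variable {hM : M * M.map (starRingEnd ℂ) = 1}

theorem antilinearConj_apply (X : Matrix n n ℂ) :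
    antilinearConj M hM X = M * X.map (starRingEnd ℂ) * M.map (starRingEnd ℂ) := rfl

theorem antilinearConj_smul (c : ℂ) (X : Matrix n n ℂ) :
    antilinearConj M hM (c • X) = starRingEnd ℂ c • antilinearConj M hM X := by
  simp only [antilinearConj_apply, Matrix.map_smul' _ _ _ (map_mul _), Matrix.mul_smul,
    Matrix.smul_mul]

theorem antilinearConj_real_smul (r : ℝ) (X : Matrix n n ℂ) :
    antilinearConj M hM (r • X) = r • antilinearConj M hM X := by
  rw [← Complex.coe_smul, antilinearConj_smul, Complex.conj_ofReal, Complex.coe_smul]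

theorem trace_antilinearConj (X : Matrix n n ℂ) :
    (antilinearConj M hM X).trace = starRingEnd ℂ X.trace := by
  rw [antilinearConj_apply, trace_mul_cycle, mul_eq_one_comm.1 hM, one_mul]
  simp [Matrix.trace, map_sum]

theorem antilinearConj_exp (X : Matrix n n ℂ) :
    antilinearConj M hM (NormedSpace.exp X) = NormedSpace.exp (antilinearConj M hM X) := by
  have hconj : ∀ Y : Matrix n n ℂ, Y.map (starRingEnd ℂ) = Yᴴᵀ := fun Y => by
    ext; simp [conjTranspose_apply]
  let u : (Matrix n n ℂ)ˣ := ⟨M, M.map (starRingEnd ℂ), hM, mul_eq_one_comm.1 hM⟩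
  simp only [antilinearConj_apply, hconj, ← exp_conjTranspose, ← exp_transpose]
  exact (exp_units_conj u _).symm

theorem antilinearConj_eq_self {X : Matrix n n ℂ} (h : M * X.map (starRingEnd ℂ) = X * M) :
    antilinearConj M hM X = X := by
  rw [antilinearConj_apply, h, mul_assoc, hM, mul_one]

theorem trace_re_mul_swap_of_antilinearConj {U U' X Y : Matrix n n ℂ}
    (hU : antilinearConj M hM U = U') (hU' : antilinearConj M hM U' = U)
    (hX : antilinearConj M hM X = X) (hY : antilinearConj M hM Y = Y) :
    (U * X * U' * Y).trace.re = (U * Y * U' * X).trace.re := by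
  have h : starRingEnd ℂ (U * X * U' * Y).trace = (U * Y * U' * X).trace := by
    rw [← trace_antilinearConj (hM := hM), map_mul, map_mul, map_mul, hU, hU', hX, hY, mul_assoc,
      trace_mul_comm, ← mul_assoc, mul_assoc U]
  rw [← h, Complex.conj_re]

end AntilinearConj

section Multisystem

variable {n ι κ : Type*} [Fintype n] [DecidableEq n] [Fintype ι] {P : ι → Matrix n n ℂ}

theorem CompleteOrthogonalIdempotents.sum_sum_trace_re_comp_swap
    (hP : CompleteOrthogonalIdempotents P) (e : ι → κ → ℝ) {E : κ → Matrix n n ℂ}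
    (hE : ∀ j, E j = ∑ i, e i j • P i) {M : Matrix n n ℂ} {hM : M * M.map (starRingEnd ℂ) = 1}
    (hME : ∀ j, M * (E j).map (starRingEnd ℂ) = E j * M) {U U' : Matrix n n ℂ}
    (hU : antilinearConj M hM U = U') (hU' : antilinearConj M hM U' = U)
    (F : (κ → ℝ) → (κ → ℝ) → ℝ) :
    ∑ i, ∑ i', F (e i) (e i') * (U * P i * U' * P i').trace.re =
      ∑ i, ∑ i', F (e i') (e i) * (U * P i * U' * P i').trace.re := by
  classical
  set τ := antilinearConj M hM
  set K : (κ → ℝ) → Matrix n n ℂ := fun v => ∑ i with e i = v, P i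
  have he : ∀ i ∈ univ, e i ∈ univ.image e := fun i _ => mem_image_of_mem e (mem_univ i)
  have hKE : ∀ v j, K v * E j = v j • K v := fun v j => by
    rw [hE]; exact hP.sum_mul_sum_smul_of_eqOn fun i hi => by rw [(mem_filter.1 hi).2]
  have hEK : ∀ v j, E j * K v = v j • K v := fun v j => by
    rw [hE]; exact hP.sum_smul_mul_sum_of_eqOn fun i hi => by rw [(mem_filter.1 hi).2]
  have hKsum : ∑ v ∈ univ.image e, K v = 1 := by
    rw [sum_fiberwise_of_maps_to he, hP.complete]
  have hτK : ∀ v, τ (K v) = K v := by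
    intro v
    by_cases hv : v ∈ univ.image e
    · refine (eq_of_sum_eq_one_of_mul_eq_smul hKsum (by rw [← map_sum τ, hKsum, map_one])
        (fun v _ j => hKE v j) (fun v _ j => ?_) hv).symm
      rw [← antilinearConj_eq_self (hME j), ← map_mul, hEK, antilinearConj_real_smul]
    · have hK0 : K v = 0 :=
        sum_eq_zero fun i hi => absurd ((mem_filter.1 hi).2 ▸ he i (mem_univ i)) hv
      rw [hK0, map_zero]
  refine sum_sum_comp_swap_of_fiber_symm e _ (fun v w => ?_) F
  have hK : ∀ v w, ∑ i with e i = v, ∑ i' with e i' = w, (U * P i * U' * P i').trace.re =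
      (U * K v * U' * K w).trace.re := fun v w => by
    simp only [K, mul_sum, sum_mul, trace_sum, Complex.re_sum]
    exact sum_comm
  rw [hK, hK, trace_re_mul_swap_of_antilinearConj hU hU' (hτK v) (hτK w)]

end Multisystem

namespace CompleteOrthogonalIdempotents

variable {n ι κ : Type*} [Fintype n] [DecidableEq n] [Fintype ι] [Fintype κ]
  {P : ι → Matrix n n ℂ}

theorem exists_exp_mul_eq_smul (hP : CompleteOrthogonalIdempotents P) (e : ι → κ → ℝ)
    {E : κ → Matrix n n ℂ} (hE : ∀ j, E j = ∑ i, e i j • P i) (β : κ → ℝ) :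
    ∃ c : ℝ, ∀ i, ((NormedSpace.exp (-(∑ j, (β j : ℂ) • E j))).trace)⁻¹ •
      NormedSpace.exp (-(∑ j, (β j : ℂ) • E j)) * P i = (c * Real.exp (-(β ⬝ᵥ e i))) • P i := by
  have hG : NormedSpace.exp (-(∑ j, (β j : ℂ) • E j)) =
      hP.piAlgHom (fun i => Real.exp (-(β ⬝ᵥ e i))) := by
    rw [← exp_algHom_pi]
    congr 1
    simp only [hE, piAlgHom_apply, Complex.coe_smul, smul_sum, smul_smul, dotProduct, sum_smul,
      ← sum_neg_distrib, neg_smul]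
    exact sum_comm
  -- the partition function is real because the trace of an idempotent is its rank
  set Z : ℝ := ∑ i, Real.exp (-(β ⬝ᵥ e i)) * Module.finrank ℂ (LinearMap.range (toLin' (P i)))
  have hZ : (hP.piAlgHom (fun i => Real.exp (-(β ⬝ᵥ e i)))).trace = Z := by
    simp [Z, piAlgHom_apply, trace_sum, trace_smul, trace_eq_finrank_of_isIdempotentElem (hP.idem _)]
  refine ⟨Z⁻¹, fun i => ?_⟩
  rw [hG, hZ, smul_mul_assoc, piAlgHom_apply, hP.sum_smul_mul_self, ← Complex.ofReal_inv,
    Complex.coe_smul, smul_smul]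

end CompleteOrthogonalIdempotents

section FluctuationRelation

variable {ι κ : Type*} [Fintype ι] [Fintype κ]

theorem sum_sum_ite_sub_eq_exp_mul (e : ι → κ → ℝ) {s : ι → ι → ℝ}
    (hs : ∀ F : (κ → ℝ) → (κ → ℝ) → ℝ,
      ∑ i, ∑ i', F (e i) (e i') * s i i' = ∑ i, ∑ i', F (e i') (e i) * s i i')
    (c t : ℝ) (β φ : κ → ℝ) :
    ∑ i, ∑ i', (if e i' - e i = t • φ then c * Real.exp (-(β ⬝ᵥ e i)) * s i i' else 0) =
      Real.exp (t * (β ⬝ᵥ φ)) * ∑ i, ∑ i',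
        (if e i' - e i = t • -φ then c * Real.exp (-(β ⬝ᵥ e i)) * s i i' else 0) := by
  let F : (κ → ℝ) → (κ → ℝ) → ℝ := fun v w =>
    if w - v = t • φ then c * Real.exp (-(β ⬝ᵥ v)) else 0
  calc _ = ∑ i, ∑ i', F (e i) (e i') * s i i' := by simp only [F, ite_mul, zero_mul]
    _ = ∑ i, ∑ i', F (e i') (e i) * s i i' := hs F
    _ = _ := by
      simp only [mul_sum]
      refine sum_congr rfl fun i _ => sum_congr rfl fun i' _ => ?_
      have hcond : e i - e i' = t • φ ↔ e i' - e i = t • -φ := by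
        rw [smul_neg, ← neg_sub, neg_eq_iff_eq_neg]
      by_cases h : e i - e i' = t • φ
      · have hβ : β ⬝ᵥ e i' = β ⬝ᵥ e i - t * (β ⬝ᵥ φ) := by
          rw [← smul_eq_mul, ← dotProduct_smul, ← dotProduct_sub, ← h, sub_sub_cancel]
        simp only [F, if_pos h, if_pos (hcond.1 h), hβ, neg_sub', sub_neg_eq_add, Real.exp_add]
        ring
      · simp only [F, if_neg h, if_neg (mt hcond.2 h), zero_mul, mul_zero]

theorem sum_sum_exp_dotProduct_sub_eq (e : ι → κ → ℝ) {s : ι → ι → ℝ}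
    (hs : ∀ F : (κ → ℝ) → (κ → ℝ) → ℝ,
      ∑ i, ∑ i', F (e i) (e i') * s i i' = ∑ i, ∑ i', F (e i') (e i) * s i i')
    (c : ℝ) (α β : κ → ℝ) :
    ∑ i, ∑ i', Real.exp (-(α ⬝ᵥ (e i' - e i))) * (c * Real.exp (-(β ⬝ᵥ e i)) * s i i') =
      ∑ i, ∑ i', Real.exp (-((β - α) ⬝ᵥ (e i' - e i))) *
        (c * Real.exp (-(β ⬝ᵥ e i)) * s i i') := by
  let G : (κ → ℝ) → (κ → ℝ) → (κ → ℝ) → ℝ := fun α v w =>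
    Real.exp (-(α ⬝ᵥ (w - v))) * (c * Real.exp (-(β ⬝ᵥ v)))
  calc _ = ∑ i, ∑ i', G α (e i) (e i') * s i i' := by simp only [G, mul_assoc]
    _ = ∑ i, ∑ i', G α (e i') (e i) * s i i' := hs (G α)
    _ = _ := by
      refine sum_congr rfl fun i _ => sum_congr rfl fun i' _ => ?_
      simp only [G, ← mul_assoc, mul_right_comm _ c, ← Real.exp_add]
      congr 3
      simp only [dotProduct_sub, sub_dotProduct]
      ring

end FluctuationRelation

/-- The commuting family `E = (H₁,…,H_ℓ)` is encoded through its joint spectral resolution: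
projections `(P_i)_{i∈ι}` with joint eigenvalues `e : ι → ℝ^ℓ`, so `H_j = Σ_i e_i(j) P_i`.
Time-reversal invariance is encoded by the matrix `M` of the antilinear involution
`C v = M * conj v`. -/
theorem ttm_transient_fluctuation_relation_general
    {n ι : Type*} [Fintype n] [DecidableEq n] [Fintype ι] {ℓ : ℕ}
    (P : ι → Matrix n n ℂ)
    (hPidem : ∀ i, P i * P i = P i)
    (hPorth : ∀ i i', i ≠ i' → P i * P i' = 0) (hPsum : ∑ i, P i = 1)
    (e : ι → Fin ℓ → ℝ)
    (E : Fin ℓ → Matrix n n ℂ)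
    (hE : ∀ j, E j = ∑ i, ((e i j : ℝ) : ℂ) • P i)
    (H : Matrix n n ℂ)
    (β : Fin ℓ → ℝ)
    (ρ : Matrix n n ℂ)
    (hρ : ρ = ((NormedSpace.exp (-(∑ j, ((β j : ℝ) : ℂ) • E j))).trace)⁻¹ •
      NormedSpace.exp (-(∑ j, ((β j : ℝ) : ℂ) • E j)))
    -- time-reversal invariance: antilinear involution commuting with H, ρ and all H_j
    (M : Matrix n n ℂ)
    (hMinv : M * M.map (starRingEnd ℂ) = 1)
    (hMH : M * H.map (starRingEnd ℂ) = H * M)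
    (hME : ∀ j, M * (E j).map (starRingEnd ℂ) = E j * M)
    (t : ℝ)
    (Pr : (Fin ℓ → ℝ) → ℝ)
    (hPr : ∀ φ : Fin ℓ → ℝ, Pr φ = ∑ i, ∑ i',
      (if (fun j => e i' j - e i j) = t • φ then
        ((NormedSpace.exp ((-(Complex.I * t)) • H) * ρ * P i *
          NormedSpace.exp ((Complex.I * t) • H) * P i').trace).re
       else 0))
    (χ : (Fin ℓ → ℝ) → ℝ)
    (hχ : ∀ α : Fin ℓ → ℝ, χ α = ∑ i, ∑ i',
      Real.exp (-(∑ j, α j * (e i' j - e i j))) *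
        ((NormedSpace.exp ((-(Complex.I * t)) • H) * ρ * P i *
          NormedSpace.exp ((Complex.I * t) • H) * P i').trace).re) :
    (∀ φ : Fin ℓ → ℝ, Pr φ ≠ 0 →
      Pr (-φ) ≠ 0 ∧ Pr φ / Pr (-φ) = Real.exp (t * ∑ j, β j * φ j)) ∧
    (∀ α : Fin ℓ → ℝ, χ α = χ (β - α)) := by
  have hP : CompleteOrthogonalIdempotents P := ⟨⟨hPidem, hPorth⟩, hPsum⟩
  have hE' : ∀ j, E j = ∑ i, e i j • P i := fun j => by simp only [hE, Complex.coe_smul]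
  have hH : antilinearConj M hMinv H = H := antilinearConj_eq_self hMH
  have hconj : ∀ c : ℂ, antilinearConj M hMinv (NormedSpace.exp (c • H)) =
      NormedSpace.exp (starRingEnd ℂ c • H) := fun c => by
    rw [antilinearConj_exp, antilinearConj_smul, hH]
  have hs := hP.sum_sum_trace_re_comp_swap e hE' hME
    (U := NormedSpace.exp ((-(Complex.I * t)) • H)) (U' := NormedSpace.exp ((Complex.I * t) • H))
    (by rw [hconj]; simp) (by rw [hconj]; simp)
  obtain ⟨c, hc⟩ := hP.exists_exp_mul_eq_smul e hE' β
  have hp : ∀ (U U' : Matrix n n ℂ) i i',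
      (U * ρ * P i * U' * P i').trace.re =
        c * Real.exp (-(β ⬝ᵥ e i)) * (U * P i * U' * P i').trace.re := by
    intro U U' i i'
    rw [hρ, mul_assoc U, hc, Matrix.mul_smul, smul_mul, smul_mul, trace_smul, Complex.smul_re,
      smul_eq_mul]
  have hPr_neg : ∀ φ, Pr φ = Real.exp (t * (β ⬝ᵥ φ)) * Pr (-φ) := fun φ => by
    simp only [hPr, hp]
    exact sum_sum_ite_sub_eq_exp_mul e hs c t β φ
  refine ⟨fun φ hφ => ?_, fun α => ?_⟩
  · have hneg : Pr (-φ) ≠ 0 := fun h => hφ (by rw [hPr_neg φ, h, mul_zero])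
    exact ⟨hneg, by rw [hPr_neg φ, mul_div_assoc, div_self hneg, mul_one]; rfl⟩
  · simp only [hχ, hp]
    exact sum_sum_exp_dotProduct_sub_eq e hs c α β

/-- transient fluctuation relation: for a time-reversal invariant confined
multisystem with multi-thermal initial state ρ = e^{−β·E}/Z, the Two-Time Measurement
distribution ℙ_t satisfies ℙ_t(φ)/ℙ_t(−φ) = e^{tΣβ_jφ_j} whenever ℙ_t(φ) ≠ 0, and
equivalently χ_t(α) = χ_t(β − α).

The commuting family E = (H₁,…,H_ℓ) is encoded through its joint spectral resolution:
projections (P_i)_{i∈ι} with joint eigenvalues e : ι → ℝ^ℓ, so H_j = Σ_i e_i(j) P_i.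
Time-reversal invariance is encoded by the matrix M of an antilinear involution
C(v) = M·conj(v) commuting with H, ρ and all H_j (conj A denotes entrywise conjugation). -/
theorem ttm_transient_fluctuation_relation
    {n ι : Type*} [Fintype n] [DecidableEq n] [Fintype ι] {ℓ : ℕ}
    (P : ι → Matrix n n ℂ)
    (hPherm : ∀ i, (P i).IsHermitian) (hPidem : ∀ i, P i * P i = P i)
    (hPorth : ∀ i i', i ≠ i' → P i * P i' = 0) (hPsum : ∑ i, P i = 1)
    (e : ι → Fin ℓ → ℝ)
    (E : Fin ℓ → Matrix n n ℂ)
    (hE : ∀ j, E j = ∑ i, ((e i j : ℝ) : ℂ) • P i)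
    (V : Matrix n n ℂ) (hV : V.IsHermitian)
    (H : Matrix n n ℂ) (hH : H = (∑ j, E j) + V)
    (β : Fin ℓ → ℝ) (hβ : ∀ j, 0 < β j)
    (ρ : Matrix n n ℂ)
    (hρ : ρ = ((NormedSpace.exp (-(∑ j, ((β j : ℝ) : ℂ) • E j))).trace)⁻¹ •
      NormedSpace.exp (-(∑ j, ((β j : ℝ) : ℂ) • E j)))
    -- time-reversal invariance: antilinear involution commuting with H, ρ and all H_j
    (M : Matrix n n ℂ)
    (hMinv : M * M.map (starRingEnd ℂ) = 1)
    (hMH : M * H.map (starRingEnd ℂ) = H * M)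
    (hMρ : M * ρ.map (starRingEnd ℂ) = ρ * M)
    (hME : ∀ j, M * (E j).map (starRingEnd ℂ) = E j * M)
    (t : ℝ)
    (Pr : (Fin ℓ → ℝ) → ℝ)
    (hPr : ∀ φ : Fin ℓ → ℝ, Pr φ = ∑ i, ∑ i',
      (if (fun j => e i' j - e i j) = t • φ then
        ((NormedSpace.exp ((-(Complex.I * t)) • H) * ρ * P i *
          NormedSpace.exp ((Complex.I * t) • H) * P i').trace).re
       else 0))
    (χ : (Fin ℓ → ℝ) → ℝ)
    (hχ : ∀ α : Fin ℓ → ℝ, χ α = ∑ i, ∑ i',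
      Real.exp (-(∑ j, α j * (e i' j - e i j))) *
        ((NormedSpace.exp ((-(Complex.I * t)) • H) * ρ * P i *
          NormedSpace.exp ((Complex.I * t) • H) * P i').trace).re) :
    (∀ φ : Fin ℓ → ℝ, Pr φ ≠ 0 →
      Pr (-φ) ≠ 0 ∧ Pr φ / Pr (-φ) = Real.exp (t * ∑ j, β j * φ j)) ∧
    (∀ α : Fin ℓ → ℝ, χ α = χ (β - α)) :=
  ttm_transient_fluctuation_relation_general P hPidem hPorth hPsum e E hE H β ρ hρ M hMinv hMH hME t
    Pr hPr χ hχ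
end

section
/- Let f_t : ℝ^ℓ → (0,∞], t > 0, be such that log f_t is convex, f_t(θ𝟙) ≤ e^{Ct} for all θ ∈ ℝ with a constant C possibly depending on θ but with limsup_{t→∞}(1/t) log f_t(θ𝟙) = 0, and suppose χ̄(α) := limsup_{t→∞} (1/t) log f_t(α) is finite and continuous on B(α₀) = {α : α·𝟙 = 0, ‖α‖_∞ < α₀}. If moreover f_t(α+θ𝟙) < ∞ for all α ∈ B(α₀), θ ∈ ℝ, then for every α ∈ B(α₀) and θ ∈ ℝ, χ̄(α + θ𝟙) ≤ χ̄(α), and by convexity in fact χ̄(α + θ𝟙) = χ̄(α). -/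
/-!
Write `χ̄` for the limsup functional. It inherits convexity from `log f_t` wherever the values
involved are not `+∞`. For `p > 1` the splitting `α + θ𝟙 = p⁻¹ (p α) + (1 - p⁻¹) (θ' 𝟙)` with
`θ' = θ / (1 - p⁻¹)` (Hölder's inequality) gives `χ̄(α + θ𝟙) ≤ p⁻¹ χ̄(p α) + (1 - p⁻¹) χ̄(θ'𝟙)`,
and the last term vanishes. Letting `p ↓ 1` and using continuity of `χ̄` on `B(α₀)` yields
`χ̄(α + θ𝟙) ≤ χ̄(α)`. Applied to `±θ`, convexity at the midpoint `α = ½(α + θ𝟙) + ½(α - θ𝟙)`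
turns this into an equality.
-/

open Filter Topology

namespace EReal

lemma limsup_le_coe_mul_add_coe_mul {ι : Type*} {l : Filter ι} [l.NeBot] {g h k : ι → EReal}
    {a b : ℝ} (ha : 0 ≤ a) (hb : 0 ≤ b) (hle : ∀ᶠ t in l, g t ≤ a * h t + b * k t)
    (hh : limsup h l ≠ ⊤) (hk : limsup k l ≠ ⊤) :
    limsup g l ≤ a * limsup h l + b * limsup k l := by
  have hah : limsup (fun t => (a : EReal) * h t) l = a * limsup h l :=
    limsup_const_mul_of_nonneg_of_ne_top (by exact_mod_cast ha) (coe_ne_top a)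
  have hbk : limsup (fun t => (b : EReal) * k t) l = b * limsup k l :=
    limsup_const_mul_of_nonneg_of_ne_top (by exact_mod_cast hb) (coe_ne_top b)
  have hah_top : (a : EReal) * limsup h l ≠ ⊤ := (mul_ne_top _ _).2
    ⟨.inl (coe_ne_bot a), .inl (by exact_mod_cast ha), .inl (coe_ne_top a), .inr hh⟩
  have hbk_top : (b : EReal) * limsup k l ≠ ⊤ := (mul_ne_top _ _).2
    ⟨.inl (coe_ne_bot b), .inl (by exact_mod_cast hb), .inl (coe_ne_top b), .inr hk⟩
  calc limsup g l
      ≤ limsup ((fun t => (a : EReal) * h t) + fun t => (b : EReal) * k t) l :=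
        limsup_le_limsup hle
    _ ≤ limsup (fun t => (a : EReal) * h t) l + limsup (fun t => (b : EReal) * k t) l :=
        limsup_add_le (.inr (hbk ▸ hbk_top)) (.inl (hah ▸ hah_top))
    _ = a * limsup h l + b * limsup k l := by rw [hah, hbk]

lemma le_of_le_coe_mul_add_coe_mul {a b c : EReal} {u : ℝ} (hu0 : 0 < u) (hu1 : u ≤ 1)
    (ha : a ≠ ⊤) (hc : c ≤ a) (h : a ≤ u * b + ((1 - u : ℝ) : EReal) * c) : a ≤ b := by
  induction a using EReal.rec with
  | bot => exact bot_le
  | top => exact absurd rfl ha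
  | coe r =>
    induction b using EReal.rec with
    | bot =>
      rw [coe_mul_bot_of_pos hu0, bot_add] at h
      exact absurd h (bot_lt_coe r).not_ge
    | top => exact le_top
    | coe s =>
      have hc' : ((1 - u : ℝ) : EReal) * c ≤ ((1 - u : ℝ) : EReal) * r :=
        mul_le_mul_of_nonneg_left hc (by exact_mod_cast _root_.sub_nonneg.2 hu1)
      have h' : r ≤ u * s + (1 - u) * r := by exact_mod_cast h.trans (add_le_add_right hc' _)
      exact_mod_cast le_of_mul_le_mul_left (by linarith) hu0

end EReal

section GrowthRate

variable {E : Type*} [AddCommGroup E] [Module ℝ E]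

noncomputable def upperGrowthRate (F : ℝ → E → EReal) (x : E) : EReal :=
  limsup (fun t : ℝ => ((1 / t : ℝ) : EReal) * F t x) atTop

lemma upperGrowthRate_convexComb_le {F : ℝ → E → EReal}
    (hF : ∀ t : ℝ, ∀ a b : E, ∀ u : ℝ, 0 ≤ u → u ≤ 1 →
      F t (u • a + (1 - u) • b) ≤ (u : EReal) * F t a + ((1 - u : ℝ) : EReal) * F t b)
    {a b : E} {u : ℝ} (hu0 : 0 ≤ u) (hu1 : u ≤ 1)
    (ha : upperGrowthRate F a ≠ ⊤) (hb : upperGrowthRate F b ≠ ⊤) :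
    upperGrowthRate F (u • a + (1 - u) • b) ≤
      u * upperGrowthRate F a + ((1 - u : ℝ) : EReal) * upperGrowthRate F b := by
  refine EReal.limsup_le_coe_mul_add_coe_mul hu0 (sub_nonneg.2 hu1) ?_ ha hb
  filter_upwards [eventually_gt_atTop 0] with t ht
  have ht' : (0 : EReal) ≤ ((1 / t : ℝ) : EReal) := by exact_mod_cast (one_div_pos.2 ht).le
  calc ((1 / t : ℝ) : EReal) * F t (u • a + (1 - u) • b)
      ≤ ((1 / t : ℝ) : EReal) * ((u : EReal) * F t a + ((1 - u : ℝ) : EReal) * F t b) :=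
        mul_le_mul_of_nonneg_left (hF t a b u hu0 hu1) ht'
    _ = u * (((1 / t : ℝ) : EReal) * F t a) +
          ((1 - u : ℝ) : EReal) * (((1 / t : ℝ) : EReal) * F t b) := by
        rw [EReal.left_distrib_of_nonneg_of_ne_top ht' (EReal.coe_ne_top _), mul_left_comm,
          mul_left_comm ((1 / t : ℝ) : EReal)]

lemma upperGrowthRate_add_smul_le {F : ℝ → E → EReal}
    (hF : ∀ t : ℝ, ∀ a b : E, ∀ u : ℝ, 0 ≤ u → u ≤ 1 →
      F t (u • a + (1 - u) • b) ≤ (u : EReal) * F t a + ((1 - u : ℝ) : EReal) * F t b)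
    {v : E} (hv : ∀ θ : ℝ, upperGrowthRate F (θ • v) ≤ 0) (x : E) (θ : ℝ) {p : ℝ} (hp : 1 < p)
    (hx : upperGrowthRate F (p • x) ≠ ⊤) :
    upperGrowthRate F (x + θ • v) ≤ ((p⁻¹ : ℝ) : EReal) * upperGrowthRate F (p • x) := by
  have hq : 0 < 1 - p⁻¹ := sub_pos.2 (inv_lt_one_of_one_lt₀ hp)
  have hsplit : x + θ • v = p⁻¹ • (p • x) + (1 - p⁻¹) • ((θ / (1 - p⁻¹)) • v) := by
    rw [smul_smul, smul_smul, inv_mul_cancel₀ (by positivity), one_smul, mul_div_cancel₀ _ hq.ne']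
  have hdiag : ((1 - p⁻¹ : ℝ) : EReal) * upperGrowthRate F ((θ / (1 - p⁻¹)) • v) ≤ 0 :=
    mul_nonpos_of_nonneg_of_nonpos (by exact_mod_cast hq.le) (hv _)
  calc upperGrowthRate F (x + θ • v)
      ≤ ((p⁻¹ : ℝ) : EReal) * upperGrowthRate F (p • x) +
          ((1 - p⁻¹ : ℝ) : EReal) * upperGrowthRate F ((θ / (1 - p⁻¹)) • v) := by
        rw [hsplit]
        exact upperGrowthRate_convexComb_le hF (by positivity) (inv_le_one_of_one_le₀ hp.le) hx
          ((hv _).trans_lt EReal.zero_lt_top).ne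
    _ ≤ ((p⁻¹ : ℝ) : EReal) * upperGrowthRate F (p • x) := add_le_of_nonpos_right hdiag

lemma upperGrowthRate_add_eq_of_le {F : ℝ → E → EReal}
    (hF : ∀ t : ℝ, ∀ a b : E, ∀ u : ℝ, 0 ≤ u → u ≤ 1 →
      F t (u • a + (1 - u) • b) ≤ (u : EReal) * F t a + ((1 - u : ℝ) : EReal) * F t b)
    {x w : E} (hx : upperGrowthRate F x ≠ ⊤)
    (hadd : upperGrowthRate F (x + w) ≤ upperGrowthRate F x)
    (hsub : upperGrowthRate F (x - w) ≤ upperGrowthRate F x) :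
    upperGrowthRate F (x + w) = upperGrowthRate F x := by
  have hmid := upperGrowthRate_convexComb_le hF (u := 2⁻¹) (by norm_num) (by norm_num)
    (hadd.trans_lt hx.lt_top).ne (hsub.trans_lt hx.lt_top).ne
  rw [show (2⁻¹ : ℝ) • (x + w) + (1 - 2⁻¹ : ℝ) • (x - w) = x by module] at hmid
  exact hadd.antisymm (EReal.le_of_le_coe_mul_add_coe_mul (by norm_num) (by norm_num) hx hsub hmid)

lemma le_of_eventually_le_inv_mul_smul [TopologicalSpace E] [ContinuousSMul ℝ E] {χ : E → EReal}
    {S : Set E} {x : E} {c : EReal} (hχ : ContinuousWithinAt χ S x)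
    (hS : ∀ᶠ p in 𝓝[>] (1 : ℝ), p • x ∈ S)
    (hle : ∀ᶠ p in 𝓝[>] (1 : ℝ), c ≤ ((p⁻¹ : ℝ) : EReal) * χ (p • x)) : c ≤ χ x := by
  have hsmul : Tendsto (fun p : ℝ => p • x) (𝓝[>] 1) (𝓝[S] x) := by
    refine tendsto_nhdsWithin_iff.2 ⟨?_, hS⟩
    have hc : Continuous fun p : ℝ => p • x := continuous_id.smul continuous_const
    simpa using (hc.tendsto 1).mono_left nhdsWithin_le_nhds
  have hinv : Tendsto (fun p : ℝ => ((p⁻¹ : ℝ) : EReal)) (𝓝[>] 1) (𝓝 1) := by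
    have hc : ContinuousAt (fun p : ℝ => ((p⁻¹ : ℝ) : EReal)) 1 :=
      continuous_coe_real_ereal.continuousAt.comp (continuousAt_inv₀ one_ne_zero)
    simpa using hc.tendsto.mono_left nhdsWithin_le_nhds
  have hlim := EReal.Tendsto.mul hinv (hχ.tendsto.comp hsmul) (.inl one_ne_zero)
    (.inl one_ne_zero) (.inl (EReal.coe_ne_bot 1)) (.inl (EReal.coe_ne_top 1))
  rw [one_mul] at hlim
  exact ge_of_tendsto hlim hle

end GrowthRate

theorem limsup_cgf_translation_symmetry_of_logConvex_general
    {ℓ : ℕ} (α₀ : ℝ)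
    (f : ℝ → (Fin ℓ → ℝ) → ENNReal)
    (hconv : ∀ t : ℝ, ∀ a b : Fin ℓ → ℝ, ∀ u : ℝ, 0 ≤ u → u ≤ 1 →
      ENNReal.log (f t (u • a + (1 - u) • b)) ≤
        ((u : ℝ) : EReal) * ENNReal.log (f t a) +
          ((1 - u : ℝ) : EReal) * ENNReal.log (f t b))
    (hzero : ∀ θ : ℝ,
      limsup (fun t : ℝ => ((1 / t : ℝ) : EReal) *
        ENNReal.log (f t (θ • (1 : Fin ℓ → ℝ)))) atTop = 0)
    (χbar : (Fin ℓ → ℝ) → EReal)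
    (hχbar : ∀ α, χbar α =
      limsup (fun t : ℝ => ((1 / t : ℝ) : EReal) * ENNReal.log (f t α)) atTop)
    (hfinite : ∀ α : Fin ℓ → ℝ, (∑ j, α j) = 0 → ‖α‖ < α₀ → ∃ r : ℝ, χbar α = (r : EReal))
    (hcont : ContinuousOn χbar {α : Fin ℓ → ℝ | (∑ j, α j) = 0 ∧ ‖α‖ < α₀}) :
    ∀ α : Fin ℓ → ℝ, (∑ j, α j) = 0 → ‖α‖ < α₀ → ∀ θ : ℝ,
      χbar (α + θ • (1 : Fin ℓ → ℝ)) = χbar α := by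
  set F : ℝ → (Fin ℓ → ℝ) → EReal := fun t α => ENNReal.log (f t α)
  set B : Set (Fin ℓ → ℝ) := {α | (∑ j, α j) = 0 ∧ ‖α‖ < α₀}
  obtain rfl : χbar = upperGrowthRate F := funext hχbar
  have hfinite' : ∀ α ∈ B, upperGrowthRate F α ≠ ⊤ := fun α hα =>
    (hfinite α hα.1 hα.2).elim fun r hr => hr ▸ EReal.coe_ne_top r
  have htrans : ∀ β ∈ B, ∀ θ : ℝ, upperGrowthRate F (β + θ • 1) ≤ upperGrowthRate F β := by
    intro β hβ θ
    have hnorm : Tendsto (fun p : ℝ => ‖p • β‖) (𝓝[>] 1) (𝓝 ‖β‖) := by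
      have hc : Continuous fun p : ℝ => ‖p • β‖ := (continuous_id.smul continuous_const).norm
      simpa using (hc.tendsto 1).mono_left nhdsWithin_le_nhds
    have hB : ∀ᶠ p in 𝓝[>] (1 : ℝ), p • β ∈ B := by
      filter_upwards [hnorm.eventually_lt_const hβ.2] with p hp
      exact ⟨by simp [← Finset.mul_sum, hβ.1], hp⟩
    refine le_of_eventually_le_inv_mul_smul (hcont β hβ) hB ?_
    filter_upwards [hB, self_mem_nhdsWithin] with p hpB hp
    exact upperGrowthRate_add_smul_le (F := F) hconv (fun θ => (hzero θ).le) β θ hp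
      (hfinite' _ hpB)
  intro α hsum hnorm θ
  refine upperGrowthRate_add_eq_of_le (F := F) hconv (hfinite' α ⟨hsum, hnorm⟩)
    (htrans α ⟨hsum, hnorm⟩ θ) ?_
  simpa [sub_eq_add_neg, neg_smul] using htrans α ⟨hsum, hnorm⟩ (-θ)

/-- Hölder argument for the translation symmetry: let f_t be log-convex
(0,∞]-valued functions on ℝ^ℓ with limsup (1/t) log f_t(θ𝟙) = 0 for every θ, and
suppose χ̄(α) = limsup (1/t) log f_t(α) is finite and continuous on
B(α₀) = {α·𝟙 = 0, ‖α‖_∞ < α₀}, and f_t(α+θ𝟙) < ∞ there. Then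
χ̄(α + θ𝟙) = χ̄(α) for α ∈ B(α₀), θ ∈ ℝ. -/
theorem limsup_cgf_translation_symmetry_of_logConvex
    {ℓ : ℕ} (α₀ : ℝ) (hα₀ : 0 < α₀)
    (f : ℝ → (Fin ℓ → ℝ) → ENNReal)
    (hpos : ∀ t α, f t α ≠ 0)
    (hconv : ∀ t : ℝ, ∀ a b : Fin ℓ → ℝ, ∀ u : ℝ, 0 ≤ u → u ≤ 1 →
      ENNReal.log (f t (u • a + (1 - u) • b)) ≤
        ((u : ℝ) : EReal) * ENNReal.log (f t a) +
          ((1 - u : ℝ) : EReal) * ENNReal.log (f t b))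
    (hgrow : ∀ θ : ℝ, ∃ C : ℝ, ∀ t : ℝ, 0 < t →
      f t (θ • (1 : Fin ℓ → ℝ)) ≤ ENNReal.ofReal (Real.exp (C * t)))
    (hzero : ∀ θ : ℝ,
      limsup (fun t : ℝ => ((1 / t : ℝ) : EReal) *
        ENNReal.log (f t (θ • (1 : Fin ℓ → ℝ)))) atTop = 0)
    (χbar : (Fin ℓ → ℝ) → EReal)
    (hχbar : ∀ α, χbar α =
      limsup (fun t : ℝ => ((1 / t : ℝ) : EReal) * ENNReal.log (f t α)) atTop)
    (hfinite : ∀ α : Fin ℓ → ℝ, (∑ j, α j) = 0 → ‖α‖ < α₀ → ∃ r : ℝ, χbar α = (r : EReal))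
    (hcont : ContinuousOn χbar {α : Fin ℓ → ℝ | (∑ j, α j) = 0 ∧ ‖α‖ < α₀})
    (hfin : ∀ t : ℝ, ∀ α : Fin ℓ → ℝ, (∑ j, α j) = 0 → ‖α‖ < α₀ → ∀ θ : ℝ,
      f t (α + θ • (1 : Fin ℓ → ℝ)) < ⊤) :
    ∀ α : Fin ℓ → ℝ, (∑ j, α j) = 0 → ‖α‖ < α₀ → ∀ θ : ℝ,
      χbar (α + θ • (1 : Fin ℓ → ℝ)) = χbar α :=
  limsup_cgf_translation_symmetry_of_logConvex_general α₀ f hconv hzero χbar hχbar hfinite hcont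
end

section
/- Let ρ be a density matrix on a finite-dimensional Hilbert space commuting with the commuting self-adjoint family E = (H₁,…,H_ℓ), let H = Σ_j H_j + V with V self-adjoint, and let H_{j,t} = e^{itH} H_j e^{−itH}. Then |Σ_j tr(ρ (H_{j,t} − H_j))| ≤ 2‖V‖ and Σ_{j,k} tr(ρ (H_{j,t}−H_j)(H_{k,t}−H_k)) ≤ 4‖V‖². -/
/-! Since `u = exp(itH)` commutes with `H = Σⱼ Hⱼ + V`, conjugation by `u` fixes `H`, so the total
change `Σⱼ (H_{j,t} − Hⱼ)` equals `V − u V u⋆`, of norm at most `2‖V‖` because `u` is unitary. Both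
bounds then follow from `‖tr(ρ A)‖ ≤ ‖A‖` for a density matrix `ρ`: writing `ρ = B⋆B` turns
`tr(ρ A)` into `Σᵢ ⟪wᵢ, A wᵢ⟫` with `Σᵢ ‖wᵢ‖² = tr ρ`. -/

open scoped Matrix.Norms.L2Operator ComplexOrder
open scoped MatrixOrder InnerProductSpace

namespace Matrix

variable {𝕜 m n : Type*} [RCLike 𝕜] [Fintype m] [Fintype n]

lemma trace_conjTranspose_mul_self_mul (B : Matrix m n 𝕜) (A : Matrix n n 𝕜) :
    (Bᴴ * B * A).trace =
      ∑ i, ⟪WithLp.toLp 2 (star (B i)), WithLp.toLp 2 (A *ᵥ star (B i))⟫_𝕜 := by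
  rw [Matrix.mul_assoc, trace_mul_comm, Matrix.mul_assoc]
  simp only [trace, diag, mul_apply, EuclideanSpace.inner_toLp_toLp, dotProduct, mulVec,
    conjTranspose_apply, star_star, Pi.star_apply, Finset.mul_sum, Finset.sum_mul]
  refine Finset.sum_congr rfl fun i _ => Finset.sum_congr rfl fun p _ =>
    Finset.sum_congr rfl fun q _ => ?_
  ring

lemma PosSemidef.norm_trace_mul_le [DecidableEq n] {ρ : Matrix n n 𝕜} (hρ : ρ.PosSemidef)
    (A : Matrix n n 𝕜) : ‖(ρ * A).trace‖ ≤ RCLike.re ρ.trace * ‖A‖ := by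
  obtain ⟨B, rfl⟩ := CStarAlgebra.nonneg_iff_eq_star_mul_self.mp hρ.nonneg
  set w : n → EuclideanSpace 𝕜 n := fun i => WithLp.toLp 2 (star (B i))
  have hw (i : n) : ‖⟪w i, WithLp.toLp 2 (A *ᵥ star (B i))⟫_𝕜‖ ≤ ‖A‖ * ‖w i‖ ^ 2 :=
    calc _ ≤ ‖w i‖ * ‖WithLp.toLp 2 (A *ᵥ star (B i))‖ := norm_inner_le_norm _ _
      _ ≤ ‖w i‖ * (‖A‖ * ‖w i‖) := by gcongr; exact l2_opNorm_mulVec A (w i)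
      _ = ‖A‖ * ‖w i‖ ^ 2 := by ring
  have htrace : RCLike.re (Bᴴ * B).trace = ∑ i, ‖w i‖ ^ 2 := by
    rw [← Matrix.mul_one (Bᴴ * B), trace_conjTranspose_mul_self_mul]
    simp [w, one_mulVec]
  rw [star_eq_conjTranspose, htrace, Finset.sum_mul, trace_conjTranspose_mul_self_mul]
  exact (norm_sum_le _ _).trans (Finset.sum_le_sum fun i _ => (hw i).trans_eq (mul_comm _ _))

lemma sum_sum_trace_mul_mul {ι R : Type*} [Semiring R] (s : Finset ι) (ρ : Matrix n n R)
    (D : ι → Matrix n n R) :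
    ∑ j ∈ s, ∑ k ∈ s, (ρ * D j * D k).trace = (ρ * (∑ j ∈ s, D j) * ∑ k ∈ s, D k).trace := by
  simp only [Finset.mul_sum, Finset.sum_mul, trace_sum]
  exact Finset.sum_comm

end Matrix

lemma sum_conj_sub_eq_sub_conj {R ι : Type*} [Ring R] (s : Finset ι) (E : ι → R) (V : R)
    {u v : R} (huv : u * v = 1) (hcomm : Commute u (∑ j ∈ s, E j + V)) :
    ∑ j ∈ s, (u * E j * v - E j) = V - u * V * v := by
  have hconj : u * (∑ j ∈ s, E j + V) * v = ∑ j ∈ s, E j + V := by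
    rw [hcomm.eq, mul_assoc, huv, mul_one]
  rw [Finset.sum_sub_distrib, ← Finset.sum_mul, ← Finset.mul_sum]
  rw [mul_add, add_mul] at hconj
  linear_combination (norm := abel) hconj

lemma norm_sub_conj_unitary_le {A : Type*} [NormedRing A] [StarRing A] [CStarRing A]
    (a : A) {u : A} (hu : u ∈ unitary A) : ‖a - u * a * star u‖ ≤ 2 * ‖a‖ := by
  calc ‖a - u * a * star u‖ ≤ ‖a‖ + ‖u * a * star u‖ := norm_sub_le _ _
    _ = 2 * ‖a‖ := by
      rw [mul_assoc, CStarRing.norm_mem_unitary_mul _ hu,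
        CStarRing.norm_mul_mem_unitary _ (Unitary.star_mem hu), two_mul]

namespace IsSelfAdjoint

variable {A : Type*} [NormedRing A] [NormedAlgebra ℂ A] [StarRing A] [ContinuousStar A]
  [StarModule ℂ A] {a : A}

lemma star_exp_I_mul_smul (ha : IsSelfAdjoint a) (t : ℝ) :
    star (NormedSpace.exp ((Complex.I * t) • a)) = NormedSpace.exp ((-(Complex.I * t)) • a) := by
  rw [NormedSpace.star_exp, star_smul, ha.star_eq]
  congr 2
  simp

lemma exp_I_mul_smul_mem_unitary [CompleteSpace A] (ha : IsSelfAdjoint a) (t : ℝ) :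
    NormedSpace.exp ((Complex.I * t) • a) ∈ unitary A :=
  letI : NormedAlgebra ℚ A := .restrictScalars ℚ ℂ A
  NormedSpace.exp_mem_unitary_of_mem_skewAdjoint <| ha.smul_mem_skewAdjoint <| by
    simp [skewAdjoint.mem_iff]

end IsSelfAdjoint

theorem mean_and_covariance_heat_bounds_general
    {n : Type*} [Fintype n] [DecidableEq n] {ℓ : ℕ}
    (E : Fin ℓ → Matrix n n ℂ) (V ρ : Matrix n n ℂ)
    (hE : ∀ j, (E j).IsHermitian)
    (hV : V.IsHermitian)
    (hρ : ρ.PosSemidef) (hρtr : ρ.trace = 1)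
    (H : Matrix n n ℂ) (hH : H = (∑ j, E j) + V)
    (t : ℝ)
    (Et : Fin ℓ → Matrix n n ℂ)
    (hEt : ∀ j, Et j = NormedSpace.exp ((Complex.I * t) • H) * E j *
      NormedSpace.exp ((-(Complex.I * t)) • H)) :
    ‖∑ j, (ρ * (Et j - E j)).trace‖ ≤ 2 * ‖V‖ ∧
    (∑ j, ∑ k, (ρ * (Et j - E j) * (Et k - E k)).trace).re ≤ 4 * ‖V‖ ^ 2 := by
  have hHsa : IsSelfAdjoint H := hH ▸ (isSelfAdjoint_sum _ fun j _ => hE j).add hV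
  set u := NormedSpace.exp ((Complex.I * t) • H)
  have hu : u ∈ unitary (Matrix n n ℂ) := hHsa.exp_I_mul_smul_mem_unitary t
  set D := V - u * V * star u
  have hD : ∑ j, (Et j - E j) = D := by
    simp only [hEt, ← hHsa.star_exp_I_mul_smul]
    exact sum_conj_sub_eq_sub_conj _ E V (Unitary.mul_star_self_of_mem hu)
      (hH ▸ ((Commute.refl H).smul_left _).exp_left)
  have hDnorm : ‖D‖ ≤ 2 * ‖V‖ := norm_sub_conj_unitary_le V hu
  have htrace (A : Matrix n n ℂ) : ‖(ρ * A).trace‖ ≤ ‖A‖ := by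
    simpa [hρtr] using hρ.norm_trace_mul_le A
  constructor
  · calc ‖∑ j, (ρ * (Et j - E j)).trace‖ = ‖(ρ * D).trace‖ := by
          rw [← hD, Finset.mul_sum, Matrix.trace_sum]
      _ ≤ 2 * ‖V‖ := (htrace D).trans hDnorm
  · calc (∑ j, ∑ k, (ρ * (Et j - E j) * (Et k - E k)).trace).re
        = (ρ * (D * D)).trace.re := by rw [Matrix.sum_sum_trace_mul_mul, hD, Matrix.mul_assoc]
      _ ≤ ‖D * D‖ := (Complex.re_le_norm _).trans (htrace _)
      _ ≤ ‖D‖ * ‖D‖ := norm_mul_le _ _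
      _ ≤ (2 * ‖V‖) * (2 * ‖V‖) := mul_self_le_mul_self (norm_nonneg _) hDnorm
      _ = 4 * ‖V‖ ^ 2 := by ring

/-- for a density matrix ρ commuting with the commuting family
E = (H₁,…,H_ℓ), H = Σ_j H_j + V and H_{j,t} = e^{itH} H_j e^{−itH}, one has
|Σ_j tr(ρ(H_{j,t}−H_j))| ≤ 2‖V‖ and Σ_{j,k} tr(ρ(H_{j,t}−H_j)(H_{k,t}−H_k)) ≤ 4‖V‖². -/
theorem mean_and_covariance_heat_bounds
    {n : Type*} [Fintype n] [DecidableEq n] {ℓ : ℕ}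
    (E : Fin ℓ → Matrix n n ℂ) (V ρ : Matrix n n ℂ)
    (hE : ∀ j, (E j).IsHermitian) (hEcomm : ∀ j k, E j * E k = E k * E j)
    (hV : V.IsHermitian)
    (hρ : ρ.PosSemidef) (hρtr : ρ.trace = 1)
    (hρE : ∀ j, ρ * E j = E j * ρ)
    (H : Matrix n n ℂ) (hH : H = (∑ j, E j) + V)
    (t : ℝ)
    (Et : Fin ℓ → Matrix n n ℂ)
    (hEt : ∀ j, Et j = NormedSpace.exp ((Complex.I * t) • H) * E j *
      NormedSpace.exp ((-(Complex.I * t)) • H)) :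
    ‖∑ j, (ρ * (Et j - E j)).trace‖ ≤ 2 * ‖V‖ ∧
    (∑ j, ∑ k, (ρ * (Et j - E j) * (Et k - E k)).trace).re ≤ 4 * ‖V‖ ^ 2 :=
  mean_and_covariance_heat_bounds_general E V ρ hE hV hρ hρtr H hH t Et hEt
end

section
/- Suppose the cumulant generating function (β, α) ↦ χ₊(β_eq + ζ, α), defined and C^{1,2} near (ζ,α) = (0,0), satisfies the symmetry χ₊(β_eq + ζ, α) = χ₊(β_eq + ζ, ζ − α). Then the transport coefficients L_{jk} := −∂²χ₊/∂ζ_j∂α_k |_{ζ=α=0} satisfy 2 L_{jk} = D_{jk}, where D_{jk} := ∂²χ₊/∂α_j∂α_k |_{ζ=α=0}; in particular L_{jk} = L_{kj}. -/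
/-!
Differentiating the symmetry `χ = χ ∘ R`, with `R (ζ, α) = (ζ, ζ - α)` linear and fixing the
origin, shows that the Hessian `H` of `χ` at the origin is `R`-invariant: `H (R u) (R v) = H u v`.
Evaluated at `u = (e_j, 0)`, `v = (0, e_k)` this reads `H_{ζα} = -H_{ζα} - H_{αα}`, i.e.
`2 L = D`. Reciprocity `L_{jk} = L_{kj}` then follows from Schwarz's theorem for `D`.
-/

open ContinuousLinearMap Filter Topology

variable {𝕜 : Type*} [NontriviallyNormedField 𝕜]
  {E : Type*} [NormedAddCommGroup E] [NormedSpace 𝕜 E]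
  {F : Type*} [NormedAddCommGroup F] [NormedSpace 𝕜 F]
  {G : Type*} [NormedAddCommGroup G] [NormedSpace 𝕜 G]

theorem fderiv_fderiv_apply_map_eq {f : E → G} {x : E} (T : E →L[𝕜] E) (hTx : T x = x)
    (hfT : f =ᶠ[𝓝 x] f ∘ T) (hf : ∀ᶠ y in 𝓝 x, DifferentiableAt 𝕜 f y)
    (hf' : DifferentiableAt 𝕜 (fderiv 𝕜 f) x) (u v : E) :
    fderiv 𝕜 (fderiv 𝕜 f) x (T u) (T v) = fderiv 𝕜 (fderiv 𝕜 f) x u v := by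
  have hfT' : ∀ᶠ y in 𝓝 x, DifferentiableAt 𝕜 f (T y) :=
    (T.continuous.tendsto x).eventually (by rwa [hTx])
  have hF : fderiv 𝕜 f =ᶠ[𝓝 x] fun y => (fderiv 𝕜 f (T y)).comp T := by
    filter_upwards [hfT.fderiv (𝕜 := 𝕜), hfT'] with y hy hdy
    rw [hy, (hdy.hasFDerivAt.comp y T.hasFDerivAt).fderiv]
  have hF' : HasFDerivAt (fun y => (fderiv 𝕜 f (T y)).comp T)
      (((compL 𝕜 E E G).flip T).comp ((fderiv 𝕜 (fderiv 𝕜 f) x).comp T)) x := by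
    have hf'T : HasFDerivAt (fderiv 𝕜 f) (fderiv 𝕜 (fderiv 𝕜 f) x) (T x) := by
      rw [hTx]; exact hf'.hasFDerivAt
    exact ((compL 𝕜 E E G).flip T).hasFDerivAt.comp x (hf'T.comp x T.hasFDerivAt)
  conv_rhs => rw [hF.fderiv_eq, hF'.fderiv]
  simp

section PartialDerivatives

variable {f : E × F → G} {x : E} {y : F}

theorem hasFDerivAt_fderiv_snd_apply {p : E × F} (hf : ∀ᶠ q in 𝓝 p, DifferentiableAt 𝕜 f q)
    (hf' : DifferentiableAt 𝕜 (fderiv 𝕜 f) p) (v : F) :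
    HasFDerivAt (fun q : E × F => fderiv 𝕜 (fun a => f (q.1, a)) q.2 v)
      ((fderiv 𝕜 (fderiv 𝕜 f) p).flip (0, v)) p := by
  have heq : (fun q : E × F => fderiv 𝕜 (fun a => f (q.1, a)) q.2 v)
      =ᶠ[𝓝 p] fun q => fderiv 𝕜 f q (0, v) := by
    filter_upwards [hf] with q hq
    have h : HasFDerivAt (fun a => f (q.1, a)) ((fderiv 𝕜 f q).comp (inr 𝕜 E F)) q.2 :=
      hq.hasFDerivAt.comp q.2 (hasFDerivAt_prodMk_right q.1 q.2)
    rw [h.fderiv]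
    simp
  have h := hf'.hasFDerivAt.clm_apply (hasFDerivAt_const ((0 : E), v) p)
  simp only [comp_zero, zero_add] at h
  exact h.congr_of_eventuallyEq heq

theorem fderiv_fderiv_snd_apply_left (hf : ∀ᶠ q in 𝓝 (x, y), DifferentiableAt 𝕜 f q)
    (hf' : DifferentiableAt 𝕜 (fderiv 𝕜 f) (x, y)) (v : F) (w : E) :
    fderiv 𝕜 (fun ζ => fderiv 𝕜 (fun a => f (ζ, a)) y v) x w
      = fderiv 𝕜 (fderiv 𝕜 f) (x, y) (w, 0) (0, v) := by
  have h : HasFDerivAt (fun ζ => fderiv 𝕜 (fun a => f (ζ, a)) y v)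
      (((fderiv 𝕜 (fderiv 𝕜 f) (x, y)).flip (0, v)).comp (inl 𝕜 E F)) x :=
    (hasFDerivAt_fderiv_snd_apply hf hf' v).comp (f := fun ζ => (ζ, y)) x
      (hasFDerivAt_prodMk_left x y)
  rw [h.fderiv]
  simp

theorem fderiv_fderiv_snd_apply_right (hf : ∀ᶠ q in 𝓝 (x, y), DifferentiableAt 𝕜 f q)
    (hf' : DifferentiableAt 𝕜 (fderiv 𝕜 f) (x, y)) (v w : F) :
    fderiv 𝕜 (fun a => fderiv 𝕜 (fun a' => f (x, a')) a v) y w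
      = fderiv 𝕜 (fderiv 𝕜 f) (x, y) (0, w) (0, v) := by
  have h : HasFDerivAt (fun a => fderiv 𝕜 (fun a' => f (x, a')) a v)
      (((fderiv 𝕜 (fderiv 𝕜 f) (x, y)).flip (0, v)).comp (inr 𝕜 E F)) y :=
    (hasFDerivAt_fderiv_snd_apply hf hf' v).comp (f := fun a => (x, a)) y
      (hasFDerivAt_prodMk_right x y)
  rw [h.fderiv]
  simp

end PartialDerivatives

variable (𝕜 E) in
def reflectSnd : E × E →L[𝕜] E × E :=
  (fst 𝕜 E E).prod (fst 𝕜 E E - snd 𝕜 E E)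

@[simp]
theorem reflectSnd_apply (p : E × E) : reflectSnd 𝕜 E p = (p.1, p.1 - p.2) := rfl

theorem two_nsmul_apply_inl_inr_of_reflectSnd_invariant {B : E × E →L[𝕜] E × E →L[𝕜] G}
    (hB : ∀ u v, B (reflectSnd 𝕜 E u) (reflectSnd 𝕜 E v) = B u v) (w v : E) :
    2 • B (w, 0) (0, v) = -B (0, w) (0, v) := by
  have h := hB (w, 0) (0, v)
  have hsplit : ((w, w) : E × E) = (w, 0) + (0, w) := by simp
  have hneg : ((0, -v) : E × E) = -(0, v) := by simp
  simp only [reflectSnd_apply, sub_zero, zero_sub, hsplit, hneg, map_add, map_neg,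
    add_apply] at h
  rw [eq_comm, eq_neg_iff_add_eq_zero] at h
  rwa [two_nsmul, eq_neg_iff_add_eq_zero, add_assoc]

/-- if χ₊ is C² near the origin (in (ζ,α)) and satisfies the symmetry
χ₊(β_eq+ζ, α) = χ₊(β_eq+ζ, ζ−α) near the origin, then the transport coefficients
L_{jk} = −∂²χ₊/∂ζ_j∂α_k|₀ satisfy 2L_{jk} = D_{jk} where D_{jk} = ∂²χ₊/∂α_j∂α_k|₀;
in particular L_{jk} = L_{kj}. (Here χ(ζ,α) stands for χ₊(β_eq+ζ,α).) -/
theorem onsager_reciprocity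
    {ℓ : ℕ}
    (χ : (Fin ℓ → ℝ) × (Fin ℓ → ℝ) → ℝ)
    (hreg : ContDiffAt ℝ 2 χ (0, 0))
    (hsym : ∀ᶠ p : (Fin ℓ → ℝ) × (Fin ℓ → ℝ) in nhds (0, 0), χ p = χ (p.1, p.1 - p.2))
    (L D : Fin ℓ → Fin ℓ → ℝ)
    (hL : ∀ j k, L j k =
      -(fderiv ℝ (fun ζ => fderiv ℝ (fun a => χ (ζ, a)) 0 (Pi.single k 1)) 0 (Pi.single j 1)))
    (hD : ∀ j k, D j k =
      fderiv ℝ (fun a => fderiv ℝ (fun a' => χ (0, a')) a (Pi.single k 1)) 0 (Pi.single j 1)) :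
    ∀ j k, 2 * L j k = D j k ∧ L j k = L k j := by
  have hdiff : ∀ᶠ p in 𝓝 (0, 0), DifferentiableAt ℝ χ p := by
    filter_upwards [hreg.eventually (by simp)] with p hp
    exact hp.differentiableAt two_ne_zero
  have hdiff' : DifferentiableAt ℝ (fderiv ℝ χ) (0, 0) :=
    (hreg.fderiv_right (m := 1) le_rfl).differentiableAt one_ne_zero
  have hL' (j k : Fin ℓ) :
      L j k = -fderiv ℝ (fderiv ℝ χ) (0, 0) (Pi.single j 1, 0) (0, Pi.single k 1) := by
    rw [hL, fderiv_fderiv_snd_apply_left hdiff hdiff']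
  have hD' (j k : Fin ℓ) :
      D j k = fderiv ℝ (fderiv ℝ χ) (0, 0) (0, Pi.single j 1) (0, Pi.single k 1) := by
    rw [hD, fderiv_fderiv_snd_apply_right hdiff hdiff']
  have hinv := fderiv_fderiv_apply_map_eq (f := χ) (reflectSnd ℝ _) (by simp) hsym hdiff hdiff'
  have hHsymm : IsSymmSndFDerivAt ℝ χ (0, 0) := hreg.isSymmSndFDerivAt (by simp)
  have h2L (j k : Fin ℓ) : 2 * L j k = D j k := by
    have := two_nsmul_apply_inl_inr_of_reflectSnd_invariant hinv (Pi.single j 1) (Pi.single k 1)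
    rw [two_nsmul] at this
    rw [hL', hD']
    linarith
  intro j k
  refine ⟨h2L j k, ?_⟩
  have hDsymm : D j k = D k j := by rw [hD', hD']; exact hHsymm _ _
  linarith [h2L j k, h2L k j]
end

section
/- Let e_t(α) = 𝔼[e^{−α ς}] be the moment generating function of a random variable ς (finite for all α ∈ ℝ). The symmetry e_t(α) = e_t(1−α) for all α ∈ ℝ holds if and only if the laws of ς and −ς are mutually absolutely continuous with density dℙ_{−ς}/dℙ_ς(s) = e^{−s} — i.e., for a discrete variable, ℙ(ς = s) = e^{s} ℙ(ς = −s) whenever ℙ(ς = s) ≠ 0. -/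
/-!
Reflecting `x ↦ -x` turns `e (1 - α)` into `Σ e^{-αx} e^{x} p(-x)`, so the symmetry says that two
exponential sums agree for every `α`. The functions `α ↦ e^{αy}` are characters of `(ℝ, +)`, hence
linearly independent (Dedekind), so this holds iff `p x = e^{x} p(-x)` coefficientwise; and that
relation forces `p x = 0 ↔ p (-x) = 0`, so it need only be asserted where `p x ≠ 0`.
-/

open Finset Real
open scoped Pointwise

noncomputable def Real.expMulChar (y : ℝ) : Multiplicative ℝ →* ℝ where
  toFun α := exp (α.toAdd * y)
  map_one' := by simp
  map_mul' α β := by simp [add_mul, exp_add]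

theorem Real.linearIndependent_exp_mul :
    LinearIndependent ℝ (fun (y α : ℝ) => exp (α * y)) :=
  (linearIndependent_monoidHom (Multiplicative ℝ) ℝ).comp expMulChar fun y z h => by
    simpa [expMulChar] using congr($h (Multiplicative.ofAdd 1))

theorem Real.sum_mul_exp_mul_eq_iff (u : Finset ℝ) (c d : ℝ → ℝ) :
    (∀ α, ∑ y ∈ u, c y * exp (α * y) = ∑ y ∈ u, d y * exp (α * y)) ↔ ∀ y ∈ u, c y = d y := by
  refine ⟨fun h => linearIndependent_iff'ₛ.mp linearIndependent_exp_mul u c d ?_,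
    fun h α => sum_congr rfl fun y hy => by rw [h y hy]⟩
  ext α
  simpa using h α

theorem Finset.neg_union_neg_self {α : Type*} [DecidableEq α] [InvolutiveNeg α] (s : Finset α) :
    -(s ∪ -s) = s ∪ -s := by
  ext x; simp [mem_neg', or_comm]

theorem Finset.sum_comp_neg_of_neg_eq {ι M : Type*} [DecidableEq ι] [InvolutiveNeg ι]
    [AddCommMonoid M] {u : Finset ι} (hu : -u = u) (f : ι → M) :
    ∑ x ∈ u, f (-x) = ∑ x ∈ u, f x := by
  conv_rhs => rw [← hu]
  rw [sum_neg_index]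

theorem forall_eq_exp_mul_comp_neg_iff_of_ne_zero (p : ℝ → ℝ) :
    (∀ x, p x ≠ 0 → p x = exp x * p (-x)) ↔ ∀ x, p x = exp x * p (-x) := by
  refine ⟨fun h x => ?_, fun h x _ => h x⟩
  by_cases hx : p x = 0
  · by_cases hnx : p (-x) = 0
    · rw [hx, hnx, mul_zero]
    · simpa [hx] using h (-x) hnx
  · exact h x hx

theorem mgf_symmetry_iff_fluctuation_relation_general
    (s : Finset ℝ) (p : ℝ → ℝ)
    (hsupp : ∀ x, p x ≠ 0 → x ∈ s)
    (e : ℝ → ℝ) (he : ∀ α, e α = ∑ x ∈ s, Real.exp (-(α * x)) * p x) :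
    (∀ α : ℝ, e α = e (1 - α)) ↔ (∀ x : ℝ, p x ≠ 0 → p x = Real.exp x * p (-x)) := by
  set u := s ∪ -s
  have hu : -u = u := neg_union_neg_self s
  have hpu : ∀ x ∉ u, p x = 0 := fun x hx => not_not.mp fun h => hx (mem_union_left _ (hsupp x h))
  have he_u (α : ℝ) : e α = ∑ x ∈ u, exp (-(α * x)) * p x :=
    (he α).trans <| sum_subset subset_union_left fun x _ hx => by
      rw [not_not.mp (mt (hsupp x) hx), mul_zero]
  have hmgf (α : ℝ) : e (-α) = ∑ x ∈ u, p x * exp (α * x) := by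
    rw [he_u]; exact sum_congr rfl fun x _ => by rw [neg_mul, neg_neg, mul_comm]
  have hmgf_one_sub (α : ℝ) : e (1 - -α) = ∑ x ∈ u, (exp x * p (-x)) * exp (α * x) := by
    rw [he_u, ← sum_comp_neg_of_neg_eq hu]
    refine sum_congr rfl fun x _ => ?_
    rw [mul_comm (exp x), mul_assoc, ← exp_add]
    ring_nf
  rw [forall_eq_exp_mul_comp_neg_iff_of_ne_zero, neg_surjective.forall]
  simp_rw [hmgf, hmgf_one_sub, sum_mul_exp_mul_eq_iff]
  refine ⟨fun h x => ?_, fun h x _ => h x⟩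
  by_cases hx : x ∈ u
  · exact h x hx
  · rw [hpu x hx, hpu (-x) (by rwa [← mem_neg', hu]), mul_zero]

/-- for a finitely supported (discrete) real random variable ς with
distribution p and moment generating function e(α) = Σ_s e^{−αs} p(s), the symmetry
e(α) = e(1−α) for all α holds iff p(s) = e^{s} p(−s) whenever p(s) ≠ 0. -/
theorem mgf_symmetry_iff_fluctuation_relation
    (s : Finset ℝ) (p : ℝ → ℝ)
    (hp0 : ∀ x, 0 ≤ p x) (hsupp : ∀ x, p x ≠ 0 → x ∈ s)
    (hsum : ∑ x ∈ s, p x = 1)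
    (e : ℝ → ℝ) (he : ∀ α, e α = ∑ x ∈ s, Real.exp (-(α * x)) * p x) :
    (∀ α : ℝ, e α = e (1 - α)) ↔ (∀ x : ℝ, p x ≠ 0 → p x = Real.exp x * p (-x)) :=
  mgf_symmetry_iff_fluctuation_relation_general s p hsupp e he
end

section
/- Let (H, ρ, E, V) be a finite-dimensional confined multisystem with ρ̃ = Σ_e P_e ρ P_e and χ_t(α) = tr( e^{−itH} ρ̃ e^{α·E} e^{itH} e^{−α·E} ). Then ∂χ_t/∂α_j at α = 0 equals −tr( ρ̃ (H_{j,t} − H_j) ), and ∂²χ_t/∂α_j∂α_k at α = 0 equals tr( ρ̃ (H_{j,t}−H_j)(H_{k,t}−H_k) ), where H_{j,t} = e^{itH} H_j e^{−itH}. -/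
open scoped ComplexOrder

/-!
With respect to the joint spectral decomposition `1 = ∑ i, P i`, the conjugation
`X ↦ e^{α·E} X e^{-α·E}` multiplies the `(i, i')` block of `X` by `exp (α · (e i - e i'))`.
Hence `χ_t` is a finite sum of exponentials of linear forms in `α`, and `∂/∂α_k` multiplies each
block by `e i k - e i' k`, i.e. it replaces `X` by the commutator `[E k, X]`. With `U = e^{itH}`
the derivatives at `0` are therefore `tr (U⁻¹ ρ̃ [E j, U])` and `tr (U⁻¹ ρ̃ [E j, [E k, U]])`;
writing `[E k, U] = (E k - H_{k,t}) U` and using that `ρ̃` commutes with every `E k` turns these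
into the stated traces.
-/

section Idempotents

variable {R A ι : Type*} [CommSemiring R] [Semiring A] [Algebra R A] [Fintype ι] {P : ι → A}

theorem OrthogonalIdempotents.sum_smul_mul_sum_smul (hP : OrthogonalIdempotents P) (c d : ι → R) :
    (∑ i, c i • P i) * (∑ i, d i • P i) = ∑ i, (c i * d i) • P i := by
  classical
  simp only [Finset.sum_mul_sum, smul_mul_smul_comm, hP.mul_eq, smul_ite, smul_zero,
    Finset.sum_ite_eq, Finset.mem_univ, if_true]

theorem OrthogonalIdempotents.sum_smul_mul (hP : OrthogonalIdempotents P) (a : ι → R) (i : ι) :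
    (∑ k, a k • P k) * P i = a i • P i := by
  classical
  simp [Finset.sum_mul, hP.mul_eq]

theorem OrthogonalIdempotents.mul_sum_smul (hP : OrthogonalIdempotents P) (a : ι → R) (i : ι) :
    P i * (∑ k, a k • P k) = a i • P i := by
  classical
  simp [Finset.mul_sum, hP.mul_eq]

theorem OrthogonalIdempotents.commute_sum_mul_mul (hP : OrthogonalIdempotents P) (ρ : A) (k : ι) :
    Commute (∑ i, P i * ρ * P i) (P k) := by
  classical
  have hright : ∀ i, P i * ρ * P i * P k = if i = k then P k * ρ * P k else 0 := fun i => by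
    rw [mul_assoc _ (P i), hP.mul_eq]
    split_ifs with h <;> simp [h]
  have hleft : ∀ i, P k * (P i * ρ * P i) = if i = k then P k * ρ * P k else 0 := fun i => by
    rw [← mul_assoc, ← mul_assoc, hP.mul_eq]
    by_cases h : i = k
    · simp [h]
    · simp [h, Ne.symm h]
  simp [Commute, SemiconjBy, Finset.sum_mul, Finset.mul_sum, hleft, hright]

theorem OrthogonalIdempotents.commute_sum_mul_mul_sum_smul (hP : OrthogonalIdempotents P) (ρ : A)
    (c : ι → R) : Commute (∑ i, P i * ρ * P i) (∑ k, c k • P k) :=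
  Commute.sum_right _ _ _ fun k _ => (hP.commute_sum_mul_mul ρ k).smul_right _

theorem OrthogonalIdempotents.commute_sum_smul_sum_smul (hP : OrthogonalIdempotents P)
    (c d : ι → R) : Commute (∑ i, c i • P i) (∑ i, d i • P i) := by
  rw [Commute, SemiconjBy, hP.sum_smul_mul_sum_smul, hP.sum_smul_mul_sum_smul]
  simp only [mul_comm]

namespace CompleteOrthogonalIdempotents

def sumSMulAlgHom (hP : CompleteOrthogonalIdempotents P) : (ι → R) →ₐ[R] A :=
  AlgHom.ofLinearMap (Fintype.linearCombination R P)
    (by simp [Fintype.linearCombination_apply, hP.complete])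
    (fun c d => (hP.toOrthogonalIdempotents.sum_smul_mul_sum_smul c d).symm)

theorem sumSMulAlgHom_apply (hP : CompleteOrthogonalIdempotents P) (c : ι → R) :
    hP.sumSMulAlgHom c = ∑ i, c i • P i :=
  rfl

theorem exp_sum_smul {𝔸 : Type*} [NormedRing 𝔸] [NormedAlgebra ℂ 𝔸] [CompleteSpace 𝔸]
    {P : ι → 𝔸} (hP : CompleteOrthogonalIdempotents P) (c : ι → ℂ) :
    NormedSpace.exp (∑ i, c i • P i) = ∑ i, Complex.exp (c i) • P i := by
  have hcont : Continuous hP.sumSMulAlgHom :=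
    (Fintype.linearCombination ℂ P).continuous_of_finiteDimensional
  -- `map_exp` asks for some `ℚ`-algebra structure on `𝔸`; `exp` itself does not depend on it.
  let _ : Algebra ℚ 𝔸 := Algebra.compHom 𝔸 (algebraMap ℚ ℂ)
  rw [← hP.sumSMulAlgHom_apply, ← NormedSpace.map_exp _ hcont, sumSMulAlgHom_apply]
  simp [Complex.exp_eq_exp_ℂ]

end CompleteOrthogonalIdempotents

end Idempotents

section SchurMultiplier

variable {R A ι : Type*} [Fintype ι]

/-- In a basis adapted to the decomposition `P`, this multiplies the `(i, i')` block of `X`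
by `h i i'`. -/
def schurMultiplier [SMul R A] [Mul A] [AddCommMonoid A] (P : ι → A) (h : ι → ι → R) (X : A) :
    A :=
  ∑ p : ι × ι, h p.1 p.2 • (P p.1 * X * P p.2)

theorem sum_smul_mul_mul_sum_smul [CommSemiring R] [Semiring A] [Algebra R A] (P : ι → A)
    (f g : ι → R) (X : A) :
    (∑ i, f i • P i) * X * (∑ i, g i • P i) = schurMultiplier P (fun i i' => f i * g i') X := by
  rw [schurMultiplier, Fintype.sum_prod_type, Finset.sum_mul, Finset.sum_mul]
  refine Finset.sum_congr rfl fun i _ => ?_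
  rw [Finset.mul_sum]
  refine Finset.sum_congr rfl fun i' _ => ?_
  rw [smul_mul_assoc, smul_mul_assoc, mul_smul_comm, smul_smul, mul_comm]

theorem OrthogonalIdempotents.schurMultiplier_commutator [CommRing R] [Ring A] [Algebra R A]
    {P : ι → A} (hP : OrthogonalIdempotents P) (a : ι → R) (h : ι → ι → R) (X : A) :
    schurMultiplier P h ((∑ k, a k • P k) * X - X * (∑ k, a k • P k))
      = schurMultiplier P (fun i i' => (a i - a i') * h i i') X := by
  refine Finset.sum_congr rfl fun p _ => ?_
  have hleft : ∀ Y, P p.1 * ((∑ k, a k • P k) * Y) = a p.1 • (P p.1 * Y) := fun Y => by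
    rw [← mul_assoc, hP.mul_sum_smul, smul_mul_assoc]
  simp only [mul_sub, sub_mul, mul_assoc, hleft, hP.sum_smul_mul, mul_smul_comm, smul_mul_assoc,
    smul_smul, ← sub_smul]
  congr 1
  ring

end SchurMultiplier

section ExponentialSums

variable {E F κ : Type*} [NormedAddCommGroup E] [NormedSpace ℝ E] [NormedAddCommGroup F]
  [NormedSpace ℂ F] [Fintype κ]

theorem hasFDerivAt_sum_cexp_smul (w : κ → E →L[ℝ] ℂ) (c : κ → F) (x : E) :
    HasFDerivAt (fun y => ∑ p, Complex.exp (w p y) • c p)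
      (∑ p, (Complex.exp (w p x) • w p).smulRight (c p)) x :=
  HasFDerivAt.fun_sum fun p _ =>
    ((Complex.hasDerivAt_exp _).comp_hasFDerivAt x (w p).hasFDerivAt).smul_const (c p)

theorem fderiv_sum_cexp_smul_apply (w : κ → E →L[ℝ] ℂ) (c : κ → F) (x v : E) :
    fderiv ℝ (fun y => ∑ p, Complex.exp (w p y) • c p) x v
      = ∑ p, Complex.exp (w p x) • w p v • c p := by
  simp [(hasFDerivAt_sum_cexp_smul w c x).fderiv, smul_smul]

theorem CompleteOrthogonalIdempotents.fderiv_map_exp_mul_mul_exp_neg_apply {ι 𝔸 : Type*}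
    [Fintype ι] [NormedRing 𝔸] [NormedAlgebra ℂ 𝔸] [CompleteSpace 𝔸] {P : ι → 𝔸}
    (hP : CompleteOrthogonalIdempotents P) (σ : ι → E →L[ℝ] ℂ) (B : E → 𝔸)
    (hB : ∀ x, B x = ∑ i, σ i x • P i) (φ : 𝔸 →ₗ[ℂ] F) (X : 𝔸) (x v : E) :
    fderiv ℝ (fun y => φ (NormedSpace.exp (B y) * X * NormedSpace.exp (-B y))) x v
      = φ (NormedSpace.exp (B x) * (B v * X - X * B v) * NormedSpace.exp (-B x)) := by
  have hconj : ∀ X y, NormedSpace.exp (B y) * X * NormedSpace.exp (-B y) =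
      schurMultiplier P (fun i i' => Complex.exp ((σ i - σ i') y)) X := by
    intro X y
    rw [hB, ← Finset.sum_neg_distrib, hP.exp_sum_smul]
    simp_rw [← neg_smul, hP.exp_sum_smul, sum_smul_mul_mul_sum_smul, ← Complex.exp_add]
    rfl
  have hmap : ∀ (h : ι → ι → ℂ) X,
      φ (schurMultiplier P h X) = ∑ p : ι × ι, h p.1 p.2 • φ (P p.1 * X * P p.2) := by
    intro h X
    simp [schurMultiplier, map_sum, map_smul]
  rw [hconj, hB v, hP.schurMultiplier_commutator, hmap]
  simp_rw [hconj, hmap]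
  rw [fderiv_sum_cexp_smul_apply (fun p : ι × ι => σ p.1 - σ p.2)]
  simp [smul_smul, mul_comm]

end ExponentialSums

theorem Matrix.fderiv_trace_mul_exp_mul_mul_exp_neg_apply {n ι κ : Type*} [Fintype n]
    [DecidableEq n] [Fintype ι] [Fintype κ] {P : ι → Matrix n n ℂ}
    (hP : CompleteOrthogonalIdempotents P) (e : ι → κ → ℝ) {E : κ → Matrix n n ℂ}
    (hE : ∀ j, E j = ∑ i, ((e i j : ℝ) : ℂ) • P i) (M X : Matrix n n ℂ) (α v : κ → ℝ) :
    fderiv ℝ (fun α : κ → ℝ => (M * NormedSpace.exp (∑ j, ((α j : ℝ) : ℂ) • E j) * X *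
        NormedSpace.exp (-∑ j, ((α j : ℝ) : ℂ) • E j)).trace) α v
      = (M * NormedSpace.exp (∑ j, ((α j : ℝ) : ℂ) • E j) *
          ((∑ j, ((v j : ℝ) : ℂ) • E j) * X - X * ∑ j, ((v j : ℝ) : ℂ) • E j) *
          NormedSpace.exp (-∑ j, ((α j : ℝ) : ℂ) • E j)).trace := by
  let σ : ι → (κ → ℝ) →L[ℝ] ℂ := fun i =>
    (Fintype.linearCombination ℝ fun j => (e i j : ℂ)).toContinuousLinearMap
  have hσ : ∀ α : κ → ℝ, ∑ j, ((α j : ℝ) : ℂ) • E j = ∑ i, σ i α • P i := fun α => by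
    simp only [σ, hE, Finset.smul_sum, smul_smul]
    rw [Finset.sum_comm]
    simp [Fintype.linearCombination_apply, Finset.sum_smul]
  have h := open scoped Matrix.Norms.Operator in
    hP.fderiv_map_exp_mul_mul_exp_neg_apply σ _ hσ
      ((Matrix.traceLinearMap n ℂ ℂ).comp (LinearMap.mulLeft ℂ M)) X α v
  simp only [LinearMap.comp_apply, LinearMap.mulLeft_apply, Matrix.traceLinearMap_apply,
    ← mul_assoc] at h
  exact h

section Conjugation

theorem commutator_eq_sub_conj_mul {A : Type*} [Ring A] {U U' : A} (h : U' * U = 1) (E : A) :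
    E * U - U * E = (E - U * E * U') * U := by
  rw [sub_mul, mul_assoc (U * E), h, mul_one]

variable {n R : Type*} [Fintype n] [DecidableEq n] [CommRing R] {U U' : Matrix n n R}

theorem Matrix.exp_neg_mul_exp {𝔸 : Type*} [NormedRing 𝔸] [NormedAlgebra ℚ 𝔸] [CompleteSpace 𝔸]
    (A : Matrix n n 𝔸) : NormedSpace.exp (-A) * NormedSpace.exp A = 1 := by
  rw [← Matrix.exp_add_of_commute _ _ (Commute.refl A).neg_left, neg_add_cancel,
    NormedSpace.exp_zero]

theorem Matrix.exp_mul_exp_neg {𝔸 : Type*} [NormedRing 𝔸] [NormedAlgebra ℚ 𝔸] [CompleteSpace 𝔸]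
    (A : Matrix n n 𝔸) : NormedSpace.exp A * NormedSpace.exp (-A) = 1 := by
  rw [← Matrix.exp_add_of_commute _ _ (Commute.refl A).neg_right, add_neg_cancel,
    NormedSpace.exp_zero]

theorem Matrix.trace_mul_mul_of_mul_eq_one (h : U * U' = 1) (Y : Matrix n n R) :
    (U' * Y * U).trace = Y.trace := by
  rw [Matrix.trace_mul_comm, ← mul_assoc, h, one_mul]

theorem Matrix.trace_conj_mul_commutator (h₁ : U' * U = 1) (h₂ : U * U' = 1)
    (ρ E : Matrix n n R) :
    (U' * ρ * (E * U - U * E)).trace = -(ρ * (U * E * U' - E)).trace := by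
  rw [commutator_eq_sub_conj_mul (A := Matrix n n R) h₁, ← mul_assoc, mul_assoc U',
    trace_mul_mul_of_mul_eq_one h₂, ← neg_sub, mul_neg, trace_neg]

theorem Matrix.trace_conj_mul_commutator_commutator (h₁ : U' * U = 1) (h₂ : U * U' = 1)
    {ρ E₁ E₂ : Matrix n n R} (hρ : Commute ρ E₂) (hE : Commute E₁ E₂) :
    (U' * ρ * (E₁ * (E₂ * U - U * E₂) - (E₂ * U - U * E₂) * E₁)).trace
      = (ρ * (U * E₁ * U' - E₁) * (U * E₂ * U' - E₂)).trace := by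
  have hU'U : ∀ X, U' * (U * X) = X := fun X => by rw [← mul_assoc, h₁, one_mul]
  have hcomm : E₁ * (E₂ * U - U * E₂) - (E₂ * U - U * E₂) * E₁
      = (E₁ * (E₂ - U * E₂ * U') - (E₂ - U * E₂ * U') * (U * E₁ * U')) * U := by
    simp only [mul_sub, sub_mul, mul_assoc, hU'U, h₁, mul_one]
  have hE' : ∀ X, E₂ * (E₁ * X) = E₁ * (E₂ * X) := fun X => by
    rw [← mul_assoc, ← hE.eq, mul_assoc]
  have hρEt : (ρ * (U * E₁ * U' * E₂)).trace = (ρ * (E₂ * (U * E₁ * U'))).trace := by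
    rw [← mul_assoc, trace_mul_comm, ← mul_assoc, ← hρ.eq, mul_assoc]
  simp only [mul_assoc] at hρEt
  rw [hcomm, ← mul_assoc, mul_assoc U', trace_mul_mul_of_mul_eq_one h₂]
  simp only [mul_sub, sub_mul, trace_sub, mul_assoc, hU'U, hE', hρEt]
  ring

end Conjugation

theorem ttm_mgf_derivatives_at_zero_general
    {n ι : Type*} [Fintype n] [DecidableEq n] [Fintype ι] {ℓ : ℕ}
    (P : ι → Matrix n n ℂ)
    (hPidem : ∀ i, P i * P i = P i)
    (hPorth : ∀ i i', i ≠ i' → P i * P i' = 0) (hPsum : ∑ i, P i = 1)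
    (e : ι → Fin ℓ → ℝ)
    (E : Fin ℓ → Matrix n n ℂ)
    (hE : ∀ j, E j = ∑ i, ((e i j : ℝ) : ℂ) • P i)
    (H : Matrix n n ℂ)
    (ρ : Matrix n n ℂ)
    (ρt : Matrix n n ℂ) (hρt : ρt = ∑ i, P i * ρ * P i)
    (t : ℝ)
    (χ : (Fin ℓ → ℝ) → ℂ)
    (hχ : ∀ α : Fin ℓ → ℝ, χ α =
      (NormedSpace.exp ((-(Complex.I * t)) • H) * ρt *
        NormedSpace.exp (∑ j, ((α j : ℝ) : ℂ) • E j) *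
        NormedSpace.exp ((Complex.I * t) • H) *
        NormedSpace.exp (-(∑ j, ((α j : ℝ) : ℂ) • E j))).trace)
    (Et : Fin ℓ → Matrix n n ℂ)
    (hEt : ∀ j, Et j = NormedSpace.exp ((Complex.I * t) • H) * E j *
      NormedSpace.exp ((-(Complex.I * t)) • H)) :
    (∀ j, fderiv ℝ χ 0 (Pi.single j 1) = -((ρt * (Et j - E j)).trace)) ∧
    (∀ j k, fderiv ℝ (fun α => fderiv ℝ χ α (Pi.single k 1)) 0 (Pi.single j 1) =
      (ρt * (Et j - E j) * (Et k - E k)).trace) := by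
  have hP : CompleteOrthogonalIdempotents P := ⟨⟨hPidem, fun i i' h => hPorth i i' h⟩, hPsum⟩
  have hU'U := Matrix.exp_neg_mul_exp ((Complex.I * t) • H)
  have hUU' := Matrix.exp_mul_exp_neg ((Complex.I * t) • H)
  rw [← neg_smul] at hU'U hUU'
  set U := NormedSpace.exp ((Complex.I * t) • H)
  set U' := NormedSpace.exp ((-(Complex.I * t)) • H)
  have hρE : ∀ k, Commute ρt (E k) := fun k => by
    rw [hρt, hE k]
    exact hP.commute_sum_mul_mul_sum_smul ρ _
  have hEE : ∀ j k, Commute (E j) (E k) := fun j k => by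
    rw [hE, hE]
    exact hP.commute_sum_smul_sum_smul _ _
  have hfderiv := Matrix.fderiv_trace_mul_exp_mul_mul_exp_neg_apply hP e hE (U' * ρt)
  have hsingle : ∀ k, ∑ j, (((Pi.single k 1 : Fin ℓ → ℝ) j : ℝ) : ℂ) • E j = E k := fun k => by
    simp [Pi.single_apply]
  rw [show χ = _ from funext hχ]
  refine ⟨fun j => ?_, fun j k => ?_⟩
  · rw [hfderiv, hsingle, hEt, ← Matrix.trace_conj_mul_commutator hU'U hUU']
    simp
  · rw [funext fun α => hfderiv U α (Pi.single k 1), hfderiv, hsingle, hsingle, hEt, hEt,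
      ← Matrix.trace_conj_mul_commutator_commutator hU'U hUU' (hρE k) (hEE j k)]
    simp

/-- derivatives of the TTM generating function at α = 0:
∂χ_t/∂α_j|₀ = −tr(ρ̃(H_{j,t}−H_j)) and ∂²χ_t/∂α_j∂α_k|₀ = tr(ρ̃(H_{j,t}−H_j)(H_{k,t}−H_k)). -/
theorem ttm_mgf_derivatives_at_zero
    {n ι : Type*} [Fintype n] [DecidableEq n] [Fintype ι] {ℓ : ℕ}
    (P : ι → Matrix n n ℂ)
    (hPherm : ∀ i, (P i).IsHermitian) (hPidem : ∀ i, P i * P i = P i)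
    (hPorth : ∀ i i', i ≠ i' → P i * P i' = 0) (hPsum : ∑ i, P i = 1)
    (e : ι → Fin ℓ → ℝ)
    (E : Fin ℓ → Matrix n n ℂ)
    (hE : ∀ j, E j = ∑ i, ((e i j : ℝ) : ℂ) • P i)
    (V : Matrix n n ℂ) (hV : V.IsHermitian)
    (H : Matrix n n ℂ) (hH : H = (∑ j, E j) + V)
    (ρ : Matrix n n ℂ) (hρ : ρ.PosSemidef) (hρtr : ρ.trace = 1)
    (ρt : Matrix n n ℂ) (hρt : ρt = ∑ i, P i * ρ * P i)
    (t : ℝ)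
    (χ : (Fin ℓ → ℝ) → ℂ)
    (hχ : ∀ α : Fin ℓ → ℝ, χ α =
      (NormedSpace.exp ((-(Complex.I * t)) • H) * ρt *
        NormedSpace.exp (∑ j, ((α j : ℝ) : ℂ) • E j) *
        NormedSpace.exp ((Complex.I * t) • H) *
        NormedSpace.exp (-(∑ j, ((α j : ℝ) : ℂ) • E j))).trace)
    (Et : Fin ℓ → Matrix n n ℂ)
    (hEt : ∀ j, Et j = NormedSpace.exp ((Complex.I * t) • H) * E j *
      NormedSpace.exp ((-(Complex.I * t)) • H)) :
    (∀ j, fderiv ℝ χ 0 (Pi.single j 1) = -((ρt * (Et j - E j)).trace)) ∧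
    (∀ j k, fderiv ℝ (fun α => fderiv ℝ χ α (Pi.single k 1)) 0 (Pi.single j 1) =
      (ρt * (Et j - E j) * (Et k - E k)).trace) :=
  ttm_mgf_derivatives_at_zero_general P hPidem hPorth hPsum e E hE H ρ ρt hρt t χ hχ Et hEt
end
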